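/- arXiv:2310.10242 — 5 statements merged into one kernel-verified Lean document; each statement's English description precedes it below -/
import Mathlib

section
/- The function d ↦ P^{(∞)}(d,E) is continuous and monotone increasing on the real interval (1,∞). -/
open Filter Topology

/-- A probability vector indexed by the alphabet `A`. -/
def IsProbVec {A : Type*} [Fintype A] (π : A → ℝ) : Prop :=
  (∀ a, 0 ≤ π a) ∧ ∑ a, π a = 1

/-- A column-stochastic matrix: nonnegative entries, each column sums to `1`. -/
def IsColStochastic {A : Type*} [Fintype A] (P : Matrix A A ℝ) : Prop :=
  (∀ a b, 0 ≤ P a b) ∧ ∀ b, ∑ a, P a b = 1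

/-- Assumption (A): `E` has nonnegative entries with all column sums and row sums positive. -/
def AssumptionA {A : Type*} [Fintype A] (E : Matrix A A ℝ) : Prop :=
  (∀ a b, 0 ≤ E a b) ∧ (∀ b, 0 < ∑ a, E a b) ∧ (∀ a, 0 < ∑ b, E a b)

/-- The feasible domain of Problem 1: sequences of probability vectors and
column-stochastic matrices with `P j a b = 0` whenever `E a b = 0` and
`π j = P j • π (j+1)`. -/
def Feasible {A : Type*} [Fintype A] (E : Matrix A A ℝ)
    (π : ℕ → A → ℝ) (P : ℕ → Matrix A A ℝ) : Prop :=
  (∀ j, IsProbVec (π j)) ∧ (∀ j, IsColStochastic (P j)) ∧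
    (∀ j a b, E a b = 0 → P j a b = 0) ∧ (∀ j, π j = (P j).mulVec (π (j + 1)))

/-- The objective function of Problem 1 (the convention `0 · log (0/0) = 0` is automatic
since `Real.log (x / 0) * 0 = 0`). -/
noncomputable def Finf {A : Type*} [Fintype A] (E : Matrix A A ℝ) (d : ℝ)
    (π : ℕ → A → ℝ) (P : ℕ → Matrix A A ℝ) : ℝ :=
  ∑' j : ℕ, ((d - 1) / d ^ (j + 1)) *
    ∑ a, ∑ b, π (j + 1) a * P (j + 1) b a * Real.log (E b a / P (j + 1) b a)

/-- `P^{(∞)}(d,E)`: the maximum of Problem 1. -/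
noncomputable def Pinf {A : Type*} [Fintype A] (E : Matrix A A ℝ) (d : ℝ) : ℝ :=
  sSup {x : ℝ | ∃ π P, Feasible E π P ∧ x = Finf E d π P}

/-!
With `x = 1/d` the objective is the geometric average `(1 - x) ∑ₖ xᵏ Tₖ` of the stage rewards
`Tₖ`, which are bounded by a constant depending only on `E`.

Monotonicity: for `y ≤ x` let `Sₖ = (1 - y) ∑ₘ yᵐ Tₘ₊ₖ` be the `y`-averages of the tails. Then
`(1 - y) Tₖ = Sₖ - y Sₖ₊₁`, and summing against the `x`-weights gives
`(1 - y) · avgₓ T = (1 - x) S₀ + (x - y) · avgₓ (S₍·₊₁₎)`. Each `Sₖ` is the objective at `1/y` of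
the shifted feasible sequence, hence at most `P^∞(1/y)`, and so is `avgₓ T`.

Continuity: uniformly over feasible sequences, the objectives at `d` and `d₀` differ by at most
the bound on the rewards times the `ℓ¹` distance of the two geometric weight sequences, which
tends to `0` as `d → d₀` by dominated convergence.
-/

section Averages

variable {w T : ℕ → ℝ} {B : ℝ}

lemma summable_mul_of_abs_le (hw : Summable w) (hT : ∀ k, |T k| ≤ B) :
    Summable fun k => w k * T k :=
  Summable.of_norm_bounded (hw.abs.mul_right B) fun k => by
    rw [Real.norm_eq_abs, abs_mul]
    exact mul_le_mul_of_nonneg_left (hT k) (abs_nonneg _)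

lemma abs_tsum_mul_le (hw : Summable w) (hT : ∀ k, |T k| ≤ B) :
    |∑' k, w k * T k| ≤ B * ∑' k, |w k| := by
  have hbound : ∀ k, ‖w k * T k‖ ≤ |w k| * B := fun k => by
    rw [Real.norm_eq_abs, abs_mul]
    exact mul_le_mul_of_nonneg_left (hT k) (abs_nonneg _)
  have hnorm : Summable fun k => ‖w k * T k‖ :=
    Summable.of_nonneg_of_le (fun _ => norm_nonneg _) hbound (hw.abs.mul_right B)
  calc |∑' k, w k * T k| ≤ ∑' k, ‖w k * T k‖ := norm_tsum_le_tsum_norm hnorm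
    _ ≤ ∑' k, |w k| * B := hnorm.tsum_le_tsum hbound (hw.abs.mul_right B)
    _ = B * ∑' k, |w k| := by rw [tsum_mul_right, mul_comm]

end Averages

noncomputable def geomWeight (x : ℝ) (k : ℕ) : ℝ := (1 - x) * x ^ k

noncomputable def geomAvg (x : ℝ) (T : ℕ → ℝ) : ℝ := ∑' k, geomWeight x k * T k

section GeomAvg

variable {x y B V : ℝ} {T : ℕ → ℝ}

lemma continuous_geomWeight (k : ℕ) : Continuous fun x => geomWeight x k := by
  unfold geomWeight; fun_prop

lemma geomWeight_nonneg (hx0 : 0 ≤ x) (hx1 : x < 1) (k : ℕ) : 0 ≤ geomWeight x k :=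
  mul_nonneg (by linarith) (pow_nonneg hx0 k)

lemma geomWeight_succ (x : ℝ) (k : ℕ) : geomWeight x (k + 1) = x * geomWeight x k := by
  unfold geomWeight; ring

lemma hasSum_geomWeight (hx0 : 0 ≤ x) (hx1 : x < 1) : HasSum (geomWeight x) 1 := by
  have h := (hasSum_geometric_of_lt_one hx0 hx1).mul_left (1 - x)
  rwa [mul_inv_cancel₀ (by linarith)] at h

lemma summable_geomWeight (hx0 : 0 ≤ x) (hx1 : x < 1) : Summable (geomWeight x) :=
  (hasSum_geomWeight hx0 hx1).summable

lemma tsum_abs_geomWeight (hx0 : 0 ≤ x) (hx1 : x < 1) : ∑' k, |geomWeight x k| = 1 := by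
  simp_rw [abs_of_nonneg (geomWeight_nonneg hx0 hx1 _)]
  exact (hasSum_geomWeight hx0 hx1).tsum_eq

lemma abs_geomAvg_le (hx0 : 0 ≤ x) (hx1 : x < 1) (hT : ∀ k, |T k| ≤ B) : |geomAvg x T| ≤ B := by
  simpa [geomAvg, tsum_abs_geomWeight hx0 hx1] using
    abs_tsum_mul_le (summable_geomWeight hx0 hx1) hT

lemma abs_geomAvg_sub_le (hx0 : 0 ≤ x) (hx1 : x < 1) (hy0 : 0 ≤ y) (hy1 : y < 1)
    (hT : ∀ k, |T k| ≤ B) :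
    |geomAvg x T - geomAvg y T| ≤ B * ∑' k, |geomWeight x k - geomWeight y k| := by
  have hx := summable_geomWeight hx0 hx1
  have hy := summable_geomWeight hy0 hy1
  rw [geomAvg, geomAvg, ← (summable_mul_of_abs_le hx hT).tsum_sub (summable_mul_of_abs_le hy hT)]
  simp_rw [← sub_mul]
  exact abs_tsum_mul_le (hx.sub hy) hT

lemma geomAvg_le (hx0 : 0 ≤ x) (hx1 : x < 1) (hT : ∀ k, |T k| ≤ B) (hTV : ∀ k, T k ≤ V) :
    geomAvg x T ≤ V := by
  have hx := summable_geomWeight hx0 hx1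
  calc geomAvg x T ≤ ∑' k, geomWeight x k * V :=
        (summable_mul_of_abs_le hx hT).tsum_le_tsum
          (fun k => mul_le_mul_of_nonneg_left (hTV k) (geomWeight_nonneg hx0 hx1 k))
          (hx.mul_right V)
    _ = V := by rw [tsum_mul_right, (hasSum_geomWeight hx0 hx1).tsum_eq, one_mul]

lemma geomAvg_const_mul (x c : ℝ) (T : ℕ → ℝ) :
    geomAvg x (fun k => c * T k) = c * geomAvg x T := by
  rw [geomAvg, geomAvg, ← tsum_mul_left]
  exact tsum_congr fun k => by ring

lemma geomAvg_sub (hx0 : 0 ≤ x) (hx1 : x < 1) {U : ℕ → ℝ} (hT : ∀ k, |T k| ≤ B)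
    (hU : ∀ k, |U k| ≤ B) : geomAvg x (fun k => T k - U k) = geomAvg x T - geomAvg x U := by
  have hx := summable_geomWeight hx0 hx1
  rw [geomAvg, geomAvg, geomAvg, ← (summable_mul_of_abs_le hx hT).tsum_sub
    (summable_mul_of_abs_le hx hU)]
  exact tsum_congr fun k => mul_sub _ _ _

lemma geomAvg_eq_add (hx0 : 0 ≤ x) (hx1 : x < 1) (hT : ∀ k, |T k| ≤ B) :
    geomAvg x T = (1 - x) * T 0 + x * geomAvg x (fun k => T (k + 1)) := by
  rw [geomAvg, (summable_mul_of_abs_le (summable_geomWeight hx0 hx1) hT).tsum_eq_zero_add,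
    geomAvg, ← tsum_mul_left]
  simp only [geomWeight_succ, mul_assoc]
  simp [geomWeight]

lemma geomAvg_le_of_tail_le (hy0 : 0 ≤ y) (hyx : y ≤ x) (hx1 : x < 1) (hT : ∀ k, |T k| ≤ B)
    (hV : ∀ k, geomAvg y (fun m => T (m + k)) ≤ V) : geomAvg x T ≤ V := by
  set S := fun k => geomAvg y (fun m => T (m + k))
  have hy1 : y < 1 := hyx.trans_lt hx1
  have hx0 : 0 ≤ x := hy0.trans hyx
  have hS : ∀ k, |S k| ≤ B := fun k => abs_geomAvg_le hy0 hy1 fun m => hT (m + k)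
  have hyS : ∀ k, |y * S (k + 1)| ≤ B := fun k => by
    rw [abs_mul, abs_of_nonneg hy0]
    exact (mul_le_of_le_one_left (abs_nonneg _) hy1.le).trans (hS (k + 1))
  have hrec : ∀ k, (1 - y) * T k = S k - y * S (k + 1) := fun k => by
    have hshift : (fun m => T (m + 1 + k)) = fun m => T (m + (k + 1)) :=
      funext fun m => congrArg T (by omega)
    have := geomAvg_eq_add hy0 hy1 fun m => hT (m + k)
    simp only [zero_add, hshift] at this
    simp only [S, this]
    ring
  have hmix :
      (1 - y) * geomAvg x T = (1 - x) * S 0 + (x - y) * geomAvg x (fun k => S (k + 1)) := by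
    rw [← geomAvg_const_mul]
    simp_rw [hrec]
    rw [geomAvg_sub hx0 hx1 hS hyS, geomAvg_const_mul, geomAvg_eq_add hx0 hx1 hS]
    ring
  have htail : geomAvg x (fun k => S (k + 1)) ≤ V :=
    geomAvg_le hx0 hx1 (fun k => hS _) fun k => hV _
  have h1 : (1 - y) * geomAvg x T ≤ (1 - y) * V := by
    rw [hmix]
    nlinarith [hV 0]
  exact le_of_mul_le_mul_left h1 (by linarith)

end GeomAvg

lemma tendsto_tsum_abs_geomWeight_sub {x₀ : ℝ} (hx₀ : |x₀| < 1) :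
    Tendsto (fun x => ∑' k, |geomWeight x k - geomWeight x₀ k|) (𝓝 x₀) (𝓝 0) := by
  obtain ⟨ρ, hx₀ρ, hρ1⟩ := exists_between hx₀
  have hρ0 : 0 ≤ ρ := (abs_nonneg x₀).trans hx₀ρ.le
  have hweight : ∀ x, |x| ≤ ρ → ∀ k, |geomWeight x k| ≤ 2 * ρ ^ k := fun x hx k => by
    rw [geomWeight, abs_mul, abs_pow]
    have h1 : |1 - x| ≤ 2 := by
      rw [abs_le] at hx ⊢; constructor <;> linarith
    exact mul_le_mul h1 (pow_le_pow_left₀ (abs_nonneg x) hx k) (by positivity) zero_le_two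
  have hnear : ∀ᶠ x in 𝓝 x₀, |x| < ρ :=
    (continuous_abs.tendsto x₀).eventually (gt_mem_nhds hx₀ρ)
  simpa using tendsto_tsum_of_dominated_convergence (g := fun _ => (0 : ℝ))
    (bound := fun k => 4 * ρ ^ k) ((summable_geometric_of_lt_one hρ0 hρ1).mul_left 4)
    (fun k => by
      simpa using (((continuous_geomWeight k).tendsto x₀).sub_const (geomWeight x₀ k)).abs)
    (hnear.mono fun x hx k => by
      rw [Real.norm_eq_abs, abs_abs]
      linarith [abs_sub (geomWeight x k) (geomWeight x₀ k), hweight x hx.le k,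
        hweight x₀ hx₀ρ.le k])

lemma abs_mul_mul_log_div_le {p q e : ℝ} (hp0 : 0 ≤ p) (hp1 : p ≤ 1) (hq0 : 0 ≤ q) (hq1 : q ≤ 1) :
    |p * q * Real.log (e / q)| ≤ |Real.log e| + 1 := by
  rcases hq0.eq_or_lt with rfl | hq
  · simp only [mul_zero, zero_mul, abs_zero]; positivity
  rcases eq_or_ne e 0 with rfl | he
  · simp only [zero_div, Real.log_zero, mul_zero, abs_zero, zero_add, zero_le_one]
  have hqlog : |Real.log q * q| < 1 := Real.abs_log_mul_self_lt q hq hq1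
  rw [Real.log_div he hq.ne', abs_mul, abs_of_nonneg (mul_nonneg hp0 hq0)]
  calc p * q * |Real.log e - Real.log q| ≤ q * (|Real.log e| + |Real.log q|) :=
        mul_le_mul (mul_le_of_le_one_left hq0 hp1) (abs_sub _ _) (abs_nonneg _) hq0
    _ = q * |Real.log e| + |Real.log q * q| := by
        rw [abs_mul (Real.log q), abs_of_nonneg hq0]; ring
    _ ≤ |Real.log e| + 1 := by
        gcongr
        exact mul_le_of_le_one_left (abs_nonneg _) hq1

section Problem

variable {A : Type*} [Fintype A] {E : Matrix A A ℝ} {π : ℕ → A → ℝ} {P : ℕ → Matrix A A ℝ}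
  {v : A → ℝ} {Q : Matrix A A ℝ} {d d' : ℝ}

noncomputable def stageReward (E : Matrix A A ℝ) (v : A → ℝ) (Q : Matrix A A ℝ) : ℝ :=
  ∑ a, ∑ b, v a * Q b a * Real.log (E b a / Q b a)

noncomputable def rewardBound (E : Matrix A A ℝ) : ℝ := ∑ a, ∑ b, (|Real.log (E b a)| + 1)

lemma rewardBound_nonneg (E : Matrix A A ℝ) : 0 ≤ rewardBound E := by
  unfold rewardBound; positivity

lemma IsProbVec.le_one (hv : IsProbVec v) (a : A) : v a ≤ 1 :=
  hv.2 ▸ Finset.single_le_sum (fun i _ => hv.1 i) (Finset.mem_univ a)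

lemma IsColStochastic.le_one (hQ : IsColStochastic Q) (a b : A) : Q a b ≤ 1 :=
  hQ.2 b ▸ Finset.single_le_sum (f := fun i => Q i b) (fun i _ => hQ.1 i b) (Finset.mem_univ a)

lemma abs_stageReward_le (hv : IsProbVec v) (hQ : IsColStochastic Q) :
    |stageReward E v Q| ≤ rewardBound E :=
  (Finset.abs_sum_le_sum_abs _ _).trans <| Finset.sum_le_sum fun a _ =>
    (Finset.abs_sum_le_sum_abs _ _).trans <| Finset.sum_le_sum fun b _ =>
      abs_mul_mul_log_div_le (hv.1 a) (hv.le_one a) (hQ.1 b a) (hQ.le_one b a)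

lemma Feasible.abs_stageReward_le (h : Feasible E π P) (j : ℕ) :
    |stageReward E (π j) (P j)| ≤ rewardBound E :=
  _root_.abs_stageReward_le (h.1 j) (h.2.1 j)

lemma Feasible.shift (h : Feasible E π P) (k : ℕ) :
    Feasible E (fun j => π (j + k)) (fun j => P (j + k)) := by
  refine ⟨fun j => h.1 _, fun j => h.2.1 _, fun j => h.2.2.1 _, fun j => ?_⟩
  simp only [h.2.2.2 (j + k), Nat.add_right_comm]

lemma Finf_eq_geomAvg (hd : d ≠ 0) :
    Finf E d π P = geomAvg d⁻¹ (fun j => stageReward E (π (j + 1)) (P (j + 1))) := by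
  refine tsum_congr fun j => ?_
  rw [geomWeight, inv_pow]
  congr 1
  field_simp
  ring

lemma Finf_shift_eq_geomAvg (hd : d ≠ 0) (k : ℕ) :
    Finf E d (fun j => π (j + k)) (fun j => P (j + k)) =
      geomAvg d⁻¹ (fun m => stageReward E (π (m + k + 1)) (P (m + k + 1))) := by
  simp only [Finf_eq_geomAvg hd, Nat.add_right_comm _ 1 k]

lemma abs_Finf_le (hd : 1 < d) (h : Feasible E π P) : |Finf E d π P| ≤ rewardBound E := by
  rw [Finf_eq_geomAvg (by positivity)]
  exact abs_geomAvg_le (by positivity) (inv_lt_one_of_one_lt₀ hd) fun j => h.abs_stageReward_le _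

lemma Finf_le_Pinf (hd : 1 < d) (h : Feasible E π P) : Finf E d π P ≤ Pinf E d :=
  le_csSup ⟨rewardBound E, by rintro x ⟨π, P, h, rfl⟩; exact (abs_le.1 (abs_Finf_le hd h)).2⟩
    ⟨π, P, h, rfl⟩

lemma Pinf_le_Pinf_add {c : ℝ} (hc : 0 ≤ c)
    (h : ∀ π P, Feasible E π P → Finf E d π P ≤ Pinf E d' + c) : Pinf E d ≤ Pinf E d' + c := by
  by_cases hF : ∃ π P, Feasible E π P
  · obtain ⟨π, P, hπP⟩ := hF
    refine csSup_le ⟨_, π, P, hπP, rfl⟩ ?_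
    rintro x ⟨π, P, hπP, rfl⟩
    exact h π P hπP
  · -- without feasible sequences `Pinf E` is `sSup ∅ = 0` everywhere
    push Not at hF
    simpa [Pinf, hF] using hc

end Problem

section Pinf

variable {A : Type*} [Fintype A] (E : Matrix A A ℝ)

lemma monotoneOn_Pinf : MonotoneOn (fun d : ℝ => Pinf E d) (Set.Ioi 1) := by
  intro d hd d' hd' hdd'
  have hd1 : (1 : ℝ) < d := hd
  have hd'1 : (1 : ℝ) < d' := hd'
  simpa using Pinf_le_Pinf_add (E := E) le_rfl fun π P h => by
    rw [add_zero, Finf_eq_geomAvg (by positivity)]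
    refine geomAvg_le_of_tail_le (y := d'⁻¹) (by positivity) (inv_anti₀ (by positivity) hdd')
      (inv_lt_one_of_one_lt₀ hd1) (fun j => h.abs_stageReward_le _) fun k => ?_
    rw [← Finf_shift_eq_geomAvg (by positivity)]
    exact Finf_le_Pinf hd'1 (h.shift k)

lemma Pinf_le_Pinf_add_geomWeight_dist {d d₀ : ℝ} (hd : 1 < d) (hd₀ : 1 < d₀) :
    Pinf E d ≤ Pinf E d₀ + rewardBound E * ∑' k, |geomWeight d⁻¹ k - geomWeight d₀⁻¹ k| :=
  Pinf_le_Pinf_add (mul_nonneg (rewardBound_nonneg E) (tsum_nonneg fun _ => abs_nonneg _))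
    fun π P h => by
      have hdiff := abs_geomAvg_sub_le (T := fun j => stageReward E (π (j + 1)) (P (j + 1)))
        (inv_nonneg.2 (by positivity)) (inv_lt_one_of_one_lt₀ hd) (inv_nonneg.2 (by positivity))
        (inv_lt_one_of_one_lt₀ hd₀) fun j => h.abs_stageReward_le _
      rw [← Finf_eq_geomAvg (by positivity), ← Finf_eq_geomAvg (by positivity)] at hdiff
      linarith [(abs_le.1 hdiff).2, Finf_le_Pinf hd₀ h]

lemma continuousOn_Pinf : ContinuousOn (fun d : ℝ => Pinf E d) (Set.Ioi 1) := by
  intro d₀ hd₀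
  have hd₀1 : (1 : ℝ) < d₀ := hd₀
  refine ContinuousAt.continuousWithinAt ?_
  rw [ContinuousAt, ← tendsto_sub_nhds_zero_iff]
  refine squeeze_zero_norm'
    (a := fun d => rewardBound E * ∑' k, |geomWeight d⁻¹ k - geomWeight d₀⁻¹ k|) ?_ ?_
  · filter_upwards [Ioi_mem_nhds hd₀1] with d hd
    have h₁ := Pinf_le_Pinf_add_geomWeight_dist E hd hd₀1
    have h₂ := Pinf_le_Pinf_add_geomWeight_dist E hd₀1 hd
    simp only [abs_sub_comm (geomWeight d₀⁻¹ _)] at h₂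
    rw [Real.norm_eq_abs, abs_sub_le_iff]
    constructor <;> linarith
  · have hinv : Tendsto (fun d : ℝ => d⁻¹) (𝓝 d₀) (𝓝 d₀⁻¹) := tendsto_inv₀ (by positivity)
    have hx₀ : |d₀⁻¹| < 1 := by
      rw [abs_of_pos (by positivity)]; exact inv_lt_one_of_one_lt₀ hd₀1
    simpa using ((tendsto_tsum_abs_geomWeight_sub hx₀).comp hinv).const_mul (rewardBound E)

end Pinf

theorem stmt0_general {A : Type*} [Fintype A] (E : Matrix A A ℝ) :
    ContinuousOn (fun d : ℝ => Pinf E d) (Set.Ioi 1) ∧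
      MonotoneOn (fun d : ℝ => Pinf E d) (Set.Ioi 1) :=
  ⟨continuousOn_Pinf E, monotoneOn_Pinf E⟩

/-- `d ↦ P^{(∞)}(d,E)` is continuous and monotone increasing on `(1,∞)`. -/
theorem stmt0 {A : Type*} [Fintype A] [Nonempty A] (E : Matrix A A ℝ)
    (hE : AssumptionA E) :
    ContinuousOn (fun d : ℝ => Pinf E d) (Set.Ioi 1) ∧
      MonotoneOn (fun d : ℝ => Pinf E d) (Set.Ioi 1) :=
  stmt0_general E
end

section
/- For every integer d ≥ 2, every integer k ≥ 0, every positive weight vector w, and every n ≥ 0: ‖B_{n+1}^{n+k+1}‖_w ≤ (‖B_n^{n+k}‖_w)^d and |Λ_{n+1}^{n+k+1}| = d·|Λ_n^{n+k}|; consequently the sequence a_n = log‖B_n^{n+k}‖_w / |Λ_n^{n+k}| is non-increasing in n and converges. -/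
/-!
A block on `Λ_{n+1}^{m+1}` is determined by its restrictions to the `d` subtrees hanging from
the children of the root; each restriction is a block on `Λ_n^m`, and the weight of the block
is the product of their weights. Hence `‖B_{n+1}^{m+1}‖_w ≤ ‖B_n^m‖_w ^ d` (only an inequality:
a `d`-tuple of blocks need not glue, since the common ancestors must be compatible with all of
them). Taking logarithms and dividing by `|Λ_{n+1}^{m+1}| = d |Λ_n^m|` gives monotonicity. For
convergence, every factor in the weight of a block is at least the least positive entry
`c` of `w` and `E`, and blocks exist because every column of `E` has a positive entry; so
`‖B_n^m‖_w ≥ c ^ |Λ_n^m|` and the sequence is bounded below by `log c`.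
-/

open Filter Topology

/-- The hom tree-shift `X_E^{×d}` on the rooted `d`-tree, whose vertices are the finite
words over `Fin d` (the empty word is the root, and the children of `g` are `g ++ [i]`). -/
def treeX {A : Type*} (d : ℕ) (E : Matrix A A ℝ) : Set (List (Fin d) → A) :=
  {t | ∀ g : List (Fin d), ∀ i : Fin d, 0 < E (t (g ++ [i])) (t g)}

/-- `|Λ_n^m| = Σ_{i=n}^m d^i`, the number of vertices of the `d`-tree with depth
between `n` and `m`. -/
def latCard (d n m : ℕ) : ℕ := ∑ i ∈ Finset.Icc n m, d ^ i

/-- The blocks `B_n^m`: restrictions of configurations of `X_E^{×d}` to `Λ_n^m`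
(realized as total functions pinned to `default` outside `Λ_n^m`). -/
def blockSet {A : Type*} [Inhabited A] (d : ℕ) (E : Matrix A A ℝ) (n m : ℕ) :
    Set (List (Fin d) → A) :=
  {u | ∃ t ∈ treeX d E,
        (∀ g : List (Fin d), n ≤ g.length → g.length ≤ m → u g = t g) ∧
        (∀ g : List (Fin d), g.length < n ∨ m < g.length → u g = default)}

/-- The weight of a block on `Λ_n^m`:
`∏_{g∈Δ_n} w_{u_g} · ∏_{g∈Λ_n^{m−1}} ∏_{i=1}^d E_{u_{gi}, u_g}`. -/
noncomputable def blockWeight {A : Type*} (d : ℕ) (E : Matrix A A ℝ) (w : A → ℝ)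
    (n m : ℕ) (u : List (Fin d) → A) : ℝ :=
  (∏ᶠ (g : List (Fin d)) (_ : g.length = n), w (u g)) *
    ∏ᶠ (g : List (Fin d)) (_ : n ≤ g.length ∧ g.length < m),
      ∏ i : Fin d, E (u (g ++ [i])) (u g)

/-- The partition function `‖B_n^m‖_w`. -/
noncomputable def partFn {A : Type*} [Inhabited A] (d : ℕ) (E : Matrix A A ℝ)
    (w : A → ℝ) (n m : ℕ) : ℝ :=
  ∑ᶠ u ∈ blockSet d E n m, blockWeight d E w n m u

lemma Finset.sum_le_pow_sum_of_injOn {α β R : Type*} [CommSemiring R] [PartialOrder R]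
    [IsOrderedRing R] {s : Finset α} {t : Finset β} {n : ℕ} (φ : α → Fin n → β)
    (hφ : Set.InjOn φ s) (hmaps : ∀ a ∈ s, ∀ i, φ a i ∈ t) {f : α → R} {g : β → R}
    (hg : ∀ b ∈ t, 0 ≤ g b) (hf : ∀ a ∈ s, f a = ∏ i, g (φ a i)) :
    ∑ a ∈ s, f a ≤ (∑ b ∈ t, g b) ^ n := by
  classical
  rw [Finset.sum_pow', Finset.sum_congr rfl hf,
    ← Finset.sum_image (f := fun p : Fin n → β => ∏ i, g (p i)) hφ]
  exact Finset.sum_le_sum_of_subset_of_nonneg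
    (Finset.image_subset_iff.2 fun a ha => Fintype.mem_piFinset.2 (hmaps a ha))
    fun p hp _ => Finset.prod_nonneg fun i _ => hg _ (Fintype.mem_piFinset.1 hp i)

section Words

variable {d : ℕ}

/-- The words of length `n`, i.e. the level `Δ_n` of the `d`-tree. -/
def words (d n : ℕ) : Finset (List (Fin d)) :=
  (Finset.univ : Finset (List.Vector (Fin d) n)).map
    ⟨List.Vector.toList, List.Vector.toList_injective⟩

@[simp]
lemma mem_words {n : ℕ} {g : List (Fin d)} : g ∈ words d n ↔ g.length = n := by
  simp only [words, Finset.mem_map, Finset.mem_univ, true_and, Function.Embedding.coeFn_mk]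
  exact ⟨fun ⟨v, hv⟩ => hv ▸ v.toList_length, fun h => ⟨⟨g, h⟩, rfl⟩⟩

lemma card_words (d n : ℕ) : (words d n).card = d ^ n := by
  rw [words, Finset.card_map, Finset.card_univ, card_vector, Fintype.card_fin]

lemma prod_words_succ {M : Type*} [CommMonoid M] (n : ℕ) (f : List (Fin d) → M) :
    ∏ g ∈ words d (n + 1), f g = ∏ i, ∏ g ∈ words d n, f (i :: g) := by
  have hwords : words d (n + 1) =
      (Finset.univ ×ˢ words d n).image (fun p : Fin d × List (Fin d) => p.1 :: p.2) := by
    ext g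
    cases g <;> simp
  rw [hwords, Finset.prod_image (fun p _ q _ h => by simpa [Prod.ext_iff] using h),
    Finset.prod_product]

lemma finprod_length_eq {M : Type*} [CommMonoid M] (n : ℕ) (f : List (Fin d) → M) :
    ∏ᶠ (g : List (Fin d)) (_ : g.length = n), f g = ∏ g ∈ words d n, f g :=
  finprod_cond_eq_prod_of_cond_iff f fun _ => mem_words.symm

lemma finprod_length_mem_Ico {M : Type*} [CommMonoid M] (n m : ℕ) (f : List (Fin d) → M) :
    ∏ᶠ (g : List (Fin d)) (_ : n ≤ g.length ∧ g.length < m), f g =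
      ∏ l ∈ Finset.Ico n m, ∏ g ∈ words d l, f g := by
  classical
  rw [← Finset.prod_biUnion fun l _ l' _ hll' =>
    Finset.disjoint_left.2 fun g hl hl' => hll' ((mem_words.1 hl).symm.trans (mem_words.1 hl'))]
  exact finprod_cond_eq_prod_of_cond_iff f fun _ => by simp

end Words

section Blocks

variable {A : Type*} {d : ℕ} {E : Matrix A A ℝ} {w : A → ℝ}

lemma blockWeight_eq_prod_words (E : Matrix A A ℝ) (w : A → ℝ) (n m : ℕ)
    (u : List (Fin d) → A) :
    blockWeight d E w n m u =
      (∏ g ∈ words d n, w (u g)) *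
        ∏ l ∈ Finset.Ico n m, ∏ g ∈ words d l, ∏ i, E (u (g ++ [i])) (u g) := by
  rw [blockWeight, finprod_length_eq, finprod_length_mem_Ico]

lemma blockWeight_congr {n m : ℕ} (hnm : n ≤ m) {u v : List (Fin d) → A}
    (h : ∀ g : List (Fin d), n ≤ g.length → g.length ≤ m → u g = v g) :
    blockWeight d E w n m u = blockWeight d E w n m v := by
  unfold blockWeight
  congr 1
  · exact finprod_congr fun g => finprod_congr fun hg => by rw [h g hg.ge (by omega)]
  · refine finprod_congr fun g => finprod_congr fun hg => Finset.prod_congr rfl fun i _ => ?_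
    rw [h g hg.1 hg.2.le, h (g ++ [i]) (by simp; omega) (by simp; omega)]

lemma blockWeight_succ (E : Matrix A A ℝ) (w : A → ℝ) (n m : ℕ) (u : List (Fin d) → A) :
    blockWeight d E w (n + 1) (m + 1) u =
      ∏ i, blockWeight d E w n m (fun g => u (i :: g)) := by
  simp only [blockWeight_eq_prod_words, Finset.prod_mul_distrib, ← Finset.prod_Ico_add',
    prod_words_succ, List.cons_append]
  rw [Finset.prod_comm (s := Finset.Ico n m)]

lemma blockWeight_nonneg (hE : ∀ a b, 0 ≤ E a b) (hw : ∀ a, 0 ≤ w a) (n m : ℕ)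
    (u : List (Fin d) → A) : 0 ≤ blockWeight d E w n m u := by
  rw [blockWeight_eq_prod_words]
  exact mul_nonneg (Finset.prod_nonneg fun _ _ => hw _)
    (Finset.prod_nonneg fun _ _ => Finset.prod_nonneg fun _ _ => Finset.prod_nonneg
      fun _ _ => hE _ _)

lemma comp_cons_mem_treeX {t : List (Fin d) → A} (ht : t ∈ treeX d E) (i : Fin d) :
    (fun g => t (i :: g)) ∈ treeX d E :=
  fun g j => ht (i :: g) j

variable [Inhabited A]

def restrictBlock (n m : ℕ) (v : List (Fin d) → A) : List (Fin d) → A :=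
  fun g => if n ≤ g.length ∧ g.length ≤ m then v g else default

lemma restrictBlock_mem_blockSet {t : List (Fin d) → A} (ht : t ∈ treeX d E) (n m : ℕ) :
    restrictBlock n m t ∈ blockSet d E n m :=
  ⟨t, ht, fun _ h₁ h₂ => if_pos ⟨h₁, h₂⟩, fun _ h => if_neg (by omega)⟩

lemma blockWeight_restrictBlock {n m : ℕ} (hnm : n ≤ m) (v : List (Fin d) → A) :
    blockWeight d E w n m (restrictBlock n m v) = blockWeight d E w n m v :=
  blockWeight_congr hnm fun _ h₁ h₂ => if_pos ⟨h₁, h₂⟩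

lemma restrictBlock_cons_mem_blockSet {n m : ℕ} {u : List (Fin d) → A}
    (hu : u ∈ blockSet d E (n + 1) (m + 1)) (i : Fin d) :
    restrictBlock n m (fun g => u (i :: g)) ∈ blockSet d E n m := by
  obtain ⟨t, ht, hut, -⟩ := hu
  have hut' : restrictBlock n m (fun g => u (i :: g)) =
      restrictBlock n m (fun g => t (i :: g)) := by
    funext g
    unfold restrictBlock
    split_ifs with hg
    · exact hut (i :: g) (by simp; omega) (by simp; omega)
    · rfl
  exact hut' ▸ restrictBlock_mem_blockSet (comp_cons_mem_treeX ht i) n m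

lemma eq_of_restrictBlock_cons_eq {n m : ℕ} {u v : List (Fin d) → A}
    (hu : u ∈ blockSet d E (n + 1) (m + 1)) (hv : v ∈ blockSet d E (n + 1) (m + 1))
    (h : ∀ i, restrictBlock n m (fun g => u (i :: g)) = restrictBlock n m (fun g => v (i :: g))) :
    u = v := by
  funext g
  obtain ⟨-, -, -, hu⟩ := hu
  obtain ⟨-, -, -, hv⟩ := hv
  match g with
  | [] => rw [hu [] (by simp), hv [] (by simp)]
  | i :: g =>
    by_cases hg : n ≤ g.length ∧ g.length ≤ m
    · simpa [restrictBlock, hg] using congrFun (h i) g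
    · rw [hu _ (by simp; omega), hv _ (by simp; omega)]

lemma blockSet_finite [Finite A] (E : Matrix A A ℝ) (n m : ℕ) : (blockSet d E n m).Finite := by
  have : Finite {g : List (Fin d) // g.length ≤ m} := (List.finite_length_le _ m).to_subtype
  refine Set.Finite.of_finite_image (f := fun u (g : {g : List (Fin d) // g.length ≤ m}) => u g)
    (Set.toFinite _) fun u hu v hv huv => funext fun g => ?_
  by_cases hg : g.length ≤ m
  · exact congrFun huv ⟨g, hg⟩
  · rw [hu.choose_spec.2.2 g (by omega), hv.choose_spec.2.2 g (by omega)]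

lemma partFn_eq_sum [Finite A] (E : Matrix A A ℝ) (w : A → ℝ) (n m : ℕ) :
    partFn d E w n m = ∑ u ∈ (blockSet_finite E n m).toFinset, blockWeight d E w n m u :=
  finsum_mem_eq_finite_toFinset_sum _ _

lemma partFn_succ_le_pow [Finite A] (hE : ∀ a b, 0 ≤ E a b) (hw : ∀ a, 0 ≤ w a) {n m : ℕ}
    (hnm : n ≤ m) : partFn d E w (n + 1) (m + 1) ≤ partFn d E w n m ^ d := by
  rw [partFn_eq_sum, partFn_eq_sum]
  refine Finset.sum_le_pow_sum_of_injOn (fun u i => restrictBlock n m (fun g => u (i :: g)))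
    (fun u hu v hv huv => ?_) (fun u hu i => ?_) (fun _ _ => blockWeight_nonneg hE hw n m _)
    fun u _ => ?_
  · rw [Set.Finite.coe_toFinset] at hu hv
    exact eq_of_restrictBlock_cons_eq hu hv (congrFun huv)
  · rw [Set.Finite.mem_toFinset] at hu ⊢
    exact restrictBlock_cons_mem_blockSet hu i
  · simp only [blockWeight_succ, blockWeight_restrictBlock hnm]

end Blocks

lemma latCard_succ_succ (d n m : ℕ) : latCard d (n + 1) (m + 1) = d * latCard d n m := by
  rw [latCard, latCard, ← Finset.map_add_right_Icc, Finset.sum_map, Finset.mul_sum]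
  exact Finset.sum_congr rfl fun i _ => pow_succ' d i

lemma pow_add_sum_Ico_eq_latCard {d n m : ℕ} (hnm : n ≤ m) :
    d ^ n + ∑ l ∈ Finset.Ico n m, d ^ (l + 1) = latCard d n m := by
  rw [latCard, Finset.sum_Ico_add', ← Finset.Ico_add_one_right_eq_Icc,
    Finset.sum_eq_sum_Ico_succ_bot (show n < m + 1 by omega)]

lemma latCard_pos {d n m : ℕ} (hd : 0 < d) (hnm : n ≤ m) : 0 < latCard d n m :=
  Finset.sum_pos (fun i _ => pow_pos hd i) ⟨n, Finset.mem_Icc.2 ⟨le_rfl, hnm⟩⟩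

lemma Finset.pow_card_le_prod_of_le {ι R : Type*} [CommSemiring R] [PartialOrder R] [IsOrderedRing R]
    {s : Finset ι} {f : ι → R} {c : R} (hc : 0 ≤ c) (h : ∀ i ∈ s, c ≤ f i) :
    c ^ s.card ≤ ∏ i ∈ s, f i := by
  rw [← Finset.prod_const]
  exact Finset.prod_le_prod (fun _ _ => hc) h

section LowerBound

variable {A : Type*} {d : ℕ} {E : Matrix A A ℝ} {w : A → ℝ}

lemma pow_latCard_le_blockWeight {c : ℝ} (hc : 0 ≤ c) (hcw : ∀ a, c ≤ w a)
    (hcE : ∀ a b, 0 < E a b → c ≤ E a b) {t : List (Fin d) → A} (ht : t ∈ treeX d E)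
    {n m : ℕ} (hnm : n ≤ m) : c ^ latCard d n m ≤ blockWeight d E w n m t := by
  rw [blockWeight_eq_prod_words, ← pow_add_sum_Ico_eq_latCard hnm, pow_add,
    ← Finset.prod_pow_eq_pow_sum]
  refine mul_le_mul ?_ (Finset.prod_le_prod (fun _ _ => by positivity) fun l _ => ?_)
    (by positivity) (Finset.prod_nonneg fun _ _ => hc.trans (hcw _))
  · rw [← card_words d n]
    exact Finset.pow_card_le_prod_of_le hc fun g _ => hcw _
  · rw [pow_succ', pow_mul, ← card_words d l]
    refine Finset.pow_card_le_prod_of_le (pow_nonneg hc d) fun g _ => ?_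
    simpa using Finset.pow_card_le_prod_of_le (s := Finset.univ) hc fun i _ => hcE _ _ (ht g i)

lemma AssumptionA.exists_pos_col [Fintype A] (hE : AssumptionA E) (b : A) : ∃ a, 0 < E a b := by
  by_contra! h
  exact (hE.2.1 b).not_ge (Finset.sum_nonpos fun a _ => h a)

lemma treeX_nonempty [Inhabited A] (hE : ∀ b, ∃ a, 0 < E a b) : (treeX d E).Nonempty := by
  choose p hp using hE
  exact ⟨fun g => p^[g.length] default, fun g i => by
    simpa [Function.iterate_succ_apply'] using hp _⟩

lemma pow_latCard_le_partFn [Finite A] [Inhabited A] (hE : ∀ a b, 0 ≤ E a b)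
    (hX : (treeX d E).Nonempty) {c : ℝ} (hc : 0 ≤ c) (hcw : ∀ a, c ≤ w a)
    (hcE : ∀ a b, 0 < E a b → c ≤ E a b) {n m : ℕ} (hnm : n ≤ m) :
    c ^ latCard d n m ≤ partFn d E w n m := by
  obtain ⟨t, ht⟩ := hX
  calc c ^ latCard d n m ≤ blockWeight d E w n m (restrictBlock n m t) := by
        rw [blockWeight_restrictBlock hnm]
        exact pow_latCard_le_blockWeight hc hcw hcE ht hnm
    _ ≤ partFn d E w n m := by
        rw [partFn_eq_sum]
        exact Finset.single_le_sum
          (fun u _ => blockWeight_nonneg hE (fun a => hc.trans (hcw a)) n m u)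
          ((Set.Finite.mem_toFinset _).2 (restrictBlock_mem_blockSet ht n m))

lemma exists_pos_le_weights [Finite A] [Nonempty A] (hw : ∀ a, 0 < w a) (E : Matrix A A ℝ) :
    ∃ c, 0 < c ∧ (∀ a, c ≤ w a) ∧ ∀ a b, 0 < E a b → c ≤ E a b := by
  let F : A × A → ℝ := fun p => if 0 < E p.1 p.2 then E p.1 p.2 else 1
  obtain ⟨a₀, ha₀⟩ := Finite.exists_min w
  obtain ⟨p₀, hp₀⟩ := Finite.exists_min F
  have hF : 0 < F p₀ := by
    dsimp only [F]
    split_ifs with h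
    exacts [h, one_pos]
  exact ⟨min (w a₀) (F p₀), lt_min (hw a₀) hF, fun a => (min_le_left _ _).trans (ha₀ a),
    fun a b hab => (min_le_right _ _).trans ((hp₀ (a, b)).trans_eq (if_pos hab))⟩

end LowerBound

lemma antitone_log_div_of_le_pow {P : ℕ → ℝ} {L : ℕ → ℕ} {d : ℕ} (hd : 0 < d)
    (hP : ∀ n, 0 < P n) (hL : ∀ n, 0 < L n) (hPd : ∀ n, P (n + 1) ≤ P n ^ d)
    (hLd : ∀ n, L (n + 1) = d * L n) : Antitone fun n => Real.log (P n) / L n := by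
  refine antitone_nat_of_succ_le fun n => ?_
  have hlog : Real.log (P (n + 1)) ≤ d * Real.log (P n) := by
    rw [← Real.log_pow]
    exact Real.log_le_log (hP _) (hPd n)
  have hLn : (0 : ℝ) < L n := by exact_mod_cast hL n
  calc Real.log (P (n + 1)) / L (n + 1) ≤ d * Real.log (P n) / (d * L n) := by
        rw [hLd, Nat.cast_mul]
        exact div_le_div_of_nonneg_right hlog (by positivity)
    _ = Real.log (P n) / L n := mul_div_mul_left _ _ (by positivity)

lemma log_le_log_div_of_pow_le {c P : ℝ} {L : ℕ} (hc : 0 < c) (hL : 0 < L) (h : c ^ L ≤ P) :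
    Real.log c ≤ Real.log P / L := by
  rw [le_div_iff₀ (by positivity), mul_comm, ← Real.log_pow]
  exact Real.log_le_log (pow_pos hc L) h

/-- `‖B_{n+1}^{n+k+1}‖_w ≤ (‖B_n^{n+k}‖_w)^d` and
`|Λ_{n+1}^{n+k+1}| = d·|Λ_n^{n+k}|`; consequently the sequence
`a_n = log ‖B_n^{n+k}‖_w / |Λ_n^{n+k}|` is non-increasing and converges. -/
theorem stmt7 {A : Type*} [Fintype A] [Inhabited A] (d : ℕ) (hd : 2 ≤ d)
    (E : Matrix A A ℝ) (hE : AssumptionA E) (w : A → ℝ) (hw : ∀ a, 0 < w a) (k : ℕ) :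
    (∀ n : ℕ, partFn d E w (n + 1) (n + k + 1) ≤ partFn d E w n (n + k) ^ d) ∧
    (∀ n : ℕ, latCard d (n + 1) (n + k + 1) = d * latCard d n (n + k)) ∧
    Antitone (fun n : ℕ =>
      Real.log (partFn d E w n (n + k)) / (latCard d n (n + k) : ℝ)) ∧
    ∃ L : ℝ, Tendsto (fun n : ℕ =>
      Real.log (partFn d E w n (n + k)) / (latCard d n (n + k) : ℝ)) atTop (nhds L) := by
  have hd₀ : 0 < d := by omega
  obtain ⟨c, hc, hcw, hcE⟩ := exists_pos_le_weights hw E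
  have hlower (n : ℕ) : c ^ latCard d n (n + k) ≤ partFn d E w n (n + k) :=
    pow_latCard_le_partFn hE.1 (treeX_nonempty hE.exists_pos_col) hc.le hcw hcE
      (Nat.le_add_right n k)
  have hlat (n : ℕ) : 0 < latCard d n (n + k) := latCard_pos hd₀ (Nat.le_add_right n k)
  have hP (n : ℕ) : partFn d E w (n + 1) (n + k + 1) ≤ partFn d E w n (n + k) ^ d :=
    partFn_succ_le_pow hE.1 (fun a => (hw a).le) (Nat.le_add_right n k)
  have hL (n : ℕ) : latCard d (n + 1) (n + k + 1) = d * latCard d n (n + k) :=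
    latCard_succ_succ d n (n + k)
  have hanti : Antitone (fun n : ℕ =>
      Real.log (partFn d E w n (n + k)) / (latCard d n (n + k) : ℝ)) :=
    antitone_log_div_of_le_pow hd₀ (fun n => (pow_pos hc _).trans_le (hlower n)) hlat
      (fun n => by rw [Nat.add_right_comm]; exact hP n)
      (fun n => by rw [Nat.add_right_comm]; exact hL n)
  refine ⟨hP, hL, hanti, _, tendsto_atTop_ciInf hanti ⟨Real.log c, ?_⟩⟩
  rintro _ ⟨n, rfl⟩
  exact log_le_log_div_of_pow_le hc (hlat n) (hlower n)
end

section
/- Let d ≥ 2 be an integer and w a positive weight vector. For any sequences of integers n_i ≤ m_i such that |Λ_{n_i}^{m_i}| is non-decreasing, |Λ_{n_i}^{m_i}| → ∞, and m_i − n_i → ∞, one has log‖B_{n_i}^{m_i}‖_w / |Λ_{n_i}^{m_i}| → P(X_E^{×d}, E) as i → ∞. -/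
open Filter Topology

set_option linter.unusedSectionVars false

namespace Stmt8Aux

variable {A : Type*} [Fintype A] [Inhabited A] {d : ℕ}

/-- Finset of words of length `k`. -/
def lenEq (d k : ℕ) : Finset (List (Fin d)) :=
  Finset.image List.ofFn (Finset.univ : Finset (Fin k → Fin d))

@[simp] lemma mem_lenEq {k : ℕ} {g : List (Fin d)} : g ∈ lenEq d k ↔ g.length = k := by
  constructor
  · rintro h
    obtain ⟨f, -, rfl⟩ := Finset.mem_image.1 h
    simp
  · intro h
    subst h
    exact Finset.mem_image.2 ⟨g.get, Finset.mem_univ _, List.ofFn_get g⟩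

lemma card_lenEq (k : ℕ) : (lenEq d k).card = d ^ k := by
  rw [lenEq, Finset.card_image_of_injective _ List.ofFn_injective]
  simp

lemma lenEq_zero : lenEq d 0 = {([] : List (Fin d))} := by
  ext g; simp [List.length_eq_zero_iff]

/-- Finset of words of length in `[a, b)`. -/
def lenIco (d a b : ℕ) : Finset (List (Fin d)) := (Finset.Ico a b).biUnion (lenEq d)

@[simp] lemma mem_lenIco {a b : ℕ} {g : List (Fin d)} :
    g ∈ lenIco d a b ↔ a ≤ g.length ∧ g.length < b := by
  simp only [lenIco, Finset.mem_biUnion, Finset.mem_Ico, mem_lenEq]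
  constructor
  · rintro ⟨i, hi, rfl⟩; exact hi
  · intro h; exact ⟨g.length, h, rfl⟩

lemma card_lenIco (a b : ℕ) : (lenIco d a b).card = ∑ i ∈ Finset.Ico a b, d ^ i := by
  rw [lenIco, Finset.card_biUnion]
  · exact Finset.sum_congr rfl fun i _ => card_lenEq i
  · intro i _ j _ hij
    simp only [Finset.disjoint_left, mem_lenEq]
    intro g hg1 hg2
    exact hij (hg1.symm.trans hg2)



variable {E : Matrix A A ℝ} {w : A → ℝ}

lemma blockWeight_eq (n m : ℕ) (u : List (Fin d) → A) :
    blockWeight d E w n m u =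
      (∏ g ∈ lenEq d n, w (u g)) *
        ∏ g ∈ lenIco d n m, ∏ i : Fin d, E (u (g ++ [i])) (u g) := by
  rw [blockWeight]
  congr 1
  · exact finprod_cond_eq_prod_of_cond_iff _ (fun {g} _ => mem_lenEq.symm)
  · exact finprod_cond_eq_prod_of_cond_iff _ (fun {g} _ => mem_lenIco.symm)

lemma blockSet_finite (E : Matrix A A ℝ) (n m : ℕ) : (blockSet d E n m).Finite := by
  have h : Set.InjOn (fun (u : List (Fin d) → A) (g : (lenIco d n (m+1) : Finset _)) => u g.val)
      (blockSet d E n m) := by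
    intro u hu v hv huv
    obtain ⟨-, -, -, hu2⟩ := hu
    obtain ⟨-, -, -, hv2⟩ := hv
    funext g
    by_cases hg : n ≤ g.length ∧ g.length ≤ m
    · have hmem : g ∈ lenIco d n (m+1) := mem_lenIco.2 ⟨hg.1, Nat.lt_succ_of_le hg.2⟩
      exact congrFun huv (⟨g, hmem⟩ : (lenIco d n (m+1) : Finset _))
    · rw [hu2 g (by omega), hv2 g (by omega)]
  exact Set.Finite.of_finite_image (Set.toFinite _) h

/-- The finset of blocks. -/
noncomputable def Bfin (d : ℕ) (E : Matrix A A ℝ) (n m : ℕ) : Finset (List (Fin d) → A) :=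
  (blockSet_finite (d := d) E n m).toFinset

@[simp] lemma mem_Bfin {n m : ℕ} {u : List (Fin d) → A} :
    u ∈ Bfin d E n m ↔ u ∈ blockSet d E n m := Set.Finite.mem_toFinset _

lemma partFn_eq (n m : ℕ) :
    partFn d E w n m = ∑ u ∈ Bfin d E n m, blockWeight d E w n m u := by
  rw [partFn, show blockSet d E n m = ↑(Bfin d E n m) from (Set.Finite.coe_toFinset _).symm,
    finsum_mem_coe_finset]

lemma exists_child (hE : AssumptionA E) (a : A) : ∃ c, 0 < E c a := by
  by_contra h
  push_neg at h
  have : ∑ c, E c a ≤ 0 := Finset.sum_nonpos fun c _ => h c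
  linarith [hE.2.1 a]

lemma treeX_nonempty (hE : AssumptionA E) : ∃ t, t ∈ treeX d E := by
  choose f hf using exists_child hE
  refine ⟨fun g => f^[g.length] default, fun g i => ?_⟩
  show 0 < E (f^[(g ++ [i]).length] default) (f^[g.length] default)
  have : (g ++ [i]).length = g.length + 1 := by simp
  rw [this, Function.iterate_succ_apply']
  exact hf _

lemma blockSet_nonempty (hE : AssumptionA E) (n m : ℕ) :
    ∃ u, u ∈ blockSet d E n m := by
  obtain ⟨t, ht⟩ := treeX_nonempty (d := d) hE
  refine ⟨fun g => if n ≤ g.length ∧ g.length ≤ m then t g else default, t, ht, ?_, ?_⟩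
  · intro g h1 h2; dsimp only; rw [if_pos ⟨h1, h2⟩]
  · intro g h; dsimp only; rw [if_neg (by omega)]

lemma blockWeight_pos (hw : ∀ a, 0 < w a) {n m : ℕ} {u : List (Fin d) → A}
    (hu : u ∈ blockSet d E n m) : 0 < blockWeight d E w n m u := by
  obtain ⟨t, ht, hu1, -⟩ := hu
  rw [blockWeight_eq]
  apply mul_pos
  · exact Finset.prod_pos fun g _ => hw _
  · refine Finset.prod_pos fun g hg => Finset.prod_pos fun i _ => ?_
    obtain ⟨h1, h2⟩ := mem_lenIco.1 hg
    rw [hu1 g h1 (le_of_lt h2), hu1 (g ++ [i]) (by simp; omega) (by simp; omega)]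
    exact ht g i

lemma blockWeight_nonneg (hw : ∀ a, 0 < w a) {n m : ℕ} {u : List (Fin d) → A}
    (hu : u ∈ blockSet d E n m) : 0 ≤ blockWeight d E w n m u :=
  le_of_lt (blockWeight_pos hw hu)

lemma partFn_pos (hE : AssumptionA E) (hw : ∀ a, 0 < w a) (n m : ℕ) :
    0 < partFn d E w n m := by
  rw [partFn_eq]
  obtain ⟨u, hu⟩ := blockSet_nonempty (d := d) hE n m
  exact Finset.sum_pos (fun v hv => blockWeight_pos hw (mem_Bfin.1 hv)) ⟨u, mem_Bfin.2 hu⟩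


/-- Subtree extraction map. -/
def phi (d r : ℕ) [Inhabited A] (h : List (Fin d)) (u : List (Fin d) → A) : List (Fin d) → A :=
  fun g => if g.length ≤ r then u (h ++ g) else default

lemma phi_mem {n m : ℕ} (hnm : n ≤ m) {u : List (Fin d) → A} (hu : u ∈ blockSet d E n m)
    {h : List (Fin d)} (hh : h.length = n) : phi d (m - n) h u ∈ blockSet d E 0 (m - n) := by
  obtain ⟨t, ht, hu1, hu2⟩ := hu
  refine ⟨fun g => t (h ++ g), fun g i => ?_, fun g _ hg2 => ?_, fun g hg => ?_⟩
  · show 0 < E (t (h ++ (g ++ [i]))) (t (h ++ g))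
    rw [← List.append_assoc]
    exact ht (h ++ g) i
  · show (if g.length ≤ m - n then u (h ++ g) else default) = t (h ++ g)
    rw [if_pos hg2]
    exact hu1 (h ++ g) (by simp [hh]) (by simp [hh]; omega)
  · rcases hg with hg | hg
    · omega
    · show (if g.length ≤ m - n then u (h ++ g) else default) = default
      rw [if_neg (by omega)]

lemma weight_factor {n m : ℕ} (hnm : n ≤ m) (u : List (Fin d) → A) :
    blockWeight d E w n m u =
      ∏ h ∈ lenEq d n, blockWeight d E w 0 (m - n) (phi d (m - n) h u) := by
  simp only [blockWeight_eq]
  rw [Finset.prod_mul_distrib]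
  congr 1
  · rw [lenEq_zero]
    refine Finset.prod_congr rfl fun h hh => ?_
    rw [Finset.prod_singleton]
    show w (u h) = w (if ([] : List (Fin d)).length ≤ m - n then u (h ++ []) else default)
    rw [if_pos (by simp), List.append_nil]
  · conv_rhs => rw [← Finset.prod_product']
    refine Finset.prod_nbij' (fun g => (g.take n, g.drop n)) (fun p => p.1 ++ p.2)
      ?_ ?_ ?_ ?_ ?_
    · intro g hg
      obtain ⟨h1, h2⟩ := mem_lenIco.1 hg
      refine Finset.mem_product.2 ⟨mem_lenEq.2 ?_, mem_lenIco.2 ?_⟩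
      · simp [List.length_take]; omega
      · simp [List.length_drop]; omega
    · intro p hp
      obtain ⟨hp1, hp2⟩ := Finset.mem_product.1 hp
      have h1 := mem_lenEq.1 hp1
      obtain ⟨h2, h3⟩ := mem_lenIco.1 hp2
      refine mem_lenIco.2 ?_
      simp [List.length_append]; omega
    · intro g hg
      exact List.take_append_drop n g
    · intro p hp
      obtain ⟨hp1, hp2⟩ := Finset.mem_product.1 hp
      have h1 := mem_lenEq.1 hp1
      ext1
      · simp [List.take_append, h1]
      · simp [List.drop_append, h1]
    · intro g hg
      obtain ⟨h1, h2⟩ := mem_lenIco.1 hg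
      refine Finset.prod_congr rfl fun i _ => ?_
      have e1 : phi d (m - n) (g.take n) u (g.drop n ++ [i]) = u (g ++ [i]) := by
        show (if (g.drop n ++ [i]).length ≤ m - n then _ else _) = _
        rw [if_pos (by simp [List.length_drop]; omega), ← List.append_assoc,
          List.take_append_drop]
      have e2 : phi d (m - n) (g.take n) u (g.drop n) = u g := by
        show (if (g.drop n).length ≤ m - n then _ else _) = _
        rw [if_pos (by simp [List.length_drop]; omega), List.take_append_drop]
      rw [e1, e2]

lemma partFn_le (hE : AssumptionA E) (hw : ∀ a, 0 < w a) {n m : ℕ} (hnm : n ≤ m) :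
    partFn d E w n m ≤ partFn d E w 0 (m - n) ^ d ^ n := by
  classical
  set r := m - n with hr
  rw [partFn_eq]
  have step1 : ∑ u ∈ Bfin d E n m, blockWeight d E w n m u
      = ∑ u ∈ Bfin d E n m, ∏ x ∈ (lenEq d n).attach,
          blockWeight d E w 0 r (phi d r x.1 u) := by
    refine Finset.sum_congr rfl fun u hu => ?_
    rw [weight_factor hnm, ← Finset.prod_attach (lenEq d n)
      (fun h => blockWeight d E w 0 r (phi d r h u))]
  have hinj : ∀ u ∈ Bfin d E n m, ∀ v ∈ Bfin d E n m,
      (fun h (_ : h ∈ lenEq d n) => phi d r h u) = (fun h _ => phi d r h v) → u = v := by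
    intro u hu v hv heq
    obtain ⟨-, -, -, hu2⟩ := mem_Bfin.1 hu
    obtain ⟨-, -, -, hv2⟩ := mem_Bfin.1 hv
    funext g
    by_cases hg : n ≤ g.length ∧ g.length ≤ m
    · have hmem : g.take n ∈ lenEq d n := mem_lenEq.2 (by simp [List.length_take]; omega)
      have h1 : phi d r (g.take n) u = phi d r (g.take n) v :=
        congrFun (congrFun heq (g.take n)) hmem
      have h2 := congrFun h1 (g.drop n)
      simp only [phi] at h2
      rw [if_pos (by simp [List.length_drop]; omega),
        if_pos (by simp [List.length_drop]; omega), List.take_append_drop] at h2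
      exact h2
    · rw [hu2 g (by omega), hv2 g (by omega)]
  have step2 : ∑ u ∈ Bfin d E n m, ∏ x ∈ (lenEq d n).attach,
        blockWeight d E w 0 r (phi d r x.1 u)
      = ∑ p ∈ Finset.image
          (fun u => (fun h (_ : h ∈ lenEq d n) => phi d r h u)) (Bfin d E n m),
          ∏ x ∈ (lenEq d n).attach, blockWeight d E w 0 r (p x.1 x.2) := by
    rw [Finset.sum_image hinj]
  have step3 : ∑ p ∈ Finset.image
          (fun u => (fun h (_ : h ∈ lenEq d n) => phi d r h u)) (Bfin d E n m),
          ∏ x ∈ (lenEq d n).attach, blockWeight d E w 0 r (p x.1 x.2)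
      ≤ ∑ p ∈ (lenEq d n).pi (fun _ => Bfin d E 0 r),
          ∏ x ∈ (lenEq d n).attach, blockWeight d E w 0 r (p x.1 x.2) := by
    apply Finset.sum_le_sum_of_subset_of_nonneg
    · intro p hp
      obtain ⟨u, hu, rfl⟩ := Finset.mem_image.1 hp
      exact Finset.mem_pi.2 fun h hh =>
        mem_Bfin.2 (phi_mem hnm (mem_Bfin.1 hu) (mem_lenEq.1 hh))
    · intro p hp _
      exact Finset.prod_nonneg fun x _ =>
        blockWeight_nonneg hw (mem_Bfin.1 (Finset.mem_pi.1 hp x.1 x.2))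
  have step4 : ∑ p ∈ (lenEq d n).pi (fun _ => Bfin d E 0 r),
        ∏ x ∈ (lenEq d n).attach, blockWeight d E w 0 r (p x.1 x.2)
      = partFn d E w 0 r ^ d ^ n := by
    rw [← Finset.prod_sum (lenEq d n) (fun _ => Bfin d E 0 r)
      (fun _ v => blockWeight d E w 0 r v)]
    rw [Finset.prod_const, card_lenEq, partFn_eq]
  calc ∑ u ∈ Bfin d E n m, blockWeight d E w n m u
      ≤ ∑ p ∈ (lenEq d n).pi (fun _ => Bfin d E 0 r),
          ∏ x ∈ (lenEq d n).attach, blockWeight d E w 0 r (p x.1 x.2) := by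
        rw [step1, step2]; exact step3
    _ = partFn d E w 0 r ^ d ^ n := step4


lemma exists_const (E : Matrix A A ℝ) (hw : ∀ a, 0 < w a) :
    ∃ C : ℝ, 1 ≤ C ∧ (∀ a, w a ≤ C) ∧ (∀ a b, E a b ≤ C) ∧ (∀ a, 1 ≤ C * w a) ∧
      ((Fintype.card A : ℝ) ≤ C) := by
  have hA : (Finset.univ : Finset A).Nonempty := Finset.univ_nonempty
  set c1 := Finset.univ.sup' hA w with hc1
  set c2 := Finset.univ.sup' (Finset.univ_nonempty (α := A × A)) (fun p : A × A => E p.1 p.2)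
    with hc2
  set c3 := Finset.univ.sup' hA (fun a => (w a)⁻¹) with hc3
  refine ⟨max 1 (max c1 (max c2 (max c3 (Fintype.card A)))), le_max_left _ _, ?_, ?_, ?_, ?_⟩
  · intro a
    calc w a ≤ c1 := Finset.le_sup' w (Finset.mem_univ a)
      _ ≤ _ := by
        apply le_max_of_le_right; exact le_max_left _ _
  · intro a b
    calc E a b ≤ c2 := Finset.le_sup' (fun p : A × A => E p.1 p.2) (Finset.mem_univ (a, b))
      _ ≤ _ := by
        apply le_max_of_le_right; apply le_max_of_le_right; exact le_max_left _ _
  · intro a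
    have h3 : (w a)⁻¹ ≤ max 1 (max c1 (max c2 (max c3 (Fintype.card A)))) := by
      calc (w a)⁻¹ ≤ c3 := Finset.le_sup' (fun a => (w a)⁻¹) (Finset.mem_univ a)
        _ ≤ _ := by
          apply le_max_of_le_right; apply le_max_of_le_right; apply le_max_of_le_right
          exact le_max_left _ _
    have := mul_le_mul_of_nonneg_right h3 (le_of_lt (hw a))
    rwa [inv_mul_cancel₀ (ne_of_gt (hw a))] at this
  · apply le_max_of_le_right; apply le_max_of_le_right; apply le_max_of_le_right
    exact le_max_right _ _

lemma lenIco_union {n m : ℕ} (hnm : n ≤ m) :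
    lenIco d 0 n ∪ lenIco d n m = lenIco d 0 m := by
  ext g; simp only [Finset.mem_union, mem_lenIco]; omega

lemma lenIco_disjoint {n m : ℕ} : Disjoint (lenIco d 0 n) (lenIco d n m) := by
  rw [Finset.disjoint_left]
  intro g hg1 hg2
  have h1 := mem_lenIco.1 hg1
  have h2 := mem_lenIco.1 hg2
  omega

/-- Restriction map `B_0^m → B_n^m`. -/
def rho (d n m : ℕ) [Inhabited A] (u : List (Fin d) → A) : List (Fin d) → A :=
  fun g => if n ≤ g.length ∧ g.length ≤ m then u g else default

lemma rho_mem {n m : ℕ} {u : List (Fin d) → A} (hu : u ∈ blockSet d E 0 m) :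
    rho d n m u ∈ blockSet d E n m := by
  obtain ⟨t, ht, hu1, hu2⟩ := hu
  refine ⟨t, ht, fun g h1 h2 => ?_, fun g hg => ?_⟩
  · show (if n ≤ g.length ∧ g.length ≤ m then u g else default) = t g
    rw [if_pos ⟨h1, h2⟩]
    exact hu1 g (Nat.zero_le _) h2
  · show (if n ≤ g.length ∧ g.length ≤ m then u g else default) = default
    rw [if_neg (by omega)]

lemma weight_rho_le {C : ℝ} (hC : 1 ≤ C) (hwC : ∀ a, w a ≤ C) (hEC : ∀ a b, E a b ≤ C)
    (hCw : ∀ a, 1 ≤ C * w a) (hE : AssumptionA E) (hw : ∀ a, 0 < w a)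
    {n m : ℕ} (hnm : n ≤ m) (u : List (Fin d) → A) :
    blockWeight d E w 0 m u ≤
      C ^ (1 + d * (lenIco d 0 n).card + d ^ n) * blockWeight d E w n m (rho d n m u) := by
  have hC0 : (0 : ℝ) ≤ C := le_trans zero_le_one hC
  rw [blockWeight_eq, blockWeight_eq, lenEq_zero, Finset.prod_singleton,
    ← lenIco_union hnm, Finset.prod_union lenIco_disjoint]
  set P1 := ∏ g ∈ lenIco d 0 n, ∏ i : Fin d, E (u (g ++ [i])) (u g) with hP1def
  set P2 := ∏ g ∈ lenIco d n m, ∏ i : Fin d, E (u (g ++ [i])) (u g) with hP2def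
  have hrho_eq : ∏ g ∈ lenIco d n m, ∏ i : Fin d,
      E (rho d n m u (g ++ [i])) (rho d n m u g) = P2 := by
    refine Finset.prod_congr rfl fun g hg => Finset.prod_congr rfl fun i _ => ?_
    obtain ⟨h1, h2⟩ := mem_lenIco.1 hg
    have e1 : rho d n m u (g ++ [i]) = u (g ++ [i]) := by
      show (if _ ∧ _ then _ else _) = _
      rw [if_pos (by simp; omega)]
    have e2 : rho d n m u g = u g := by
      show (if _ ∧ _ then _ else _) = _
      rw [if_pos ⟨h1, by omega⟩]
    rw [e1, e2]
  have hQ_eq : ∏ g ∈ lenEq d n, w (rho d n m u g) = ∏ g ∈ lenEq d n, w (u g) := by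
    refine Finset.prod_congr rfl fun g hg => ?_
    have := mem_lenEq.1 hg
    have : rho d n m u g = u g := by
      show (if _ ∧ _ then _ else _) = _
      rw [if_pos (by omega)]
    rw [this]
  rw [hrho_eq, hQ_eq]
  set Q := ∏ g ∈ lenEq d n, w (u g) with hQdef
  have hP2nn : (0 : ℝ) ≤ P2 :=
    Finset.prod_nonneg fun g _ => Finset.prod_nonneg fun i _ => hE.1 _ _
  have hP1nn : (0 : ℝ) ≤ P1 :=
    Finset.prod_nonneg fun g _ => Finset.prod_nonneg fun i _ => hE.1 _ _
  have hQnn : (0 : ℝ) ≤ Q := Finset.prod_nonneg fun g _ => le_of_lt (hw _)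
  have hP1le : P1 ≤ C ^ (d * (lenIco d 0 n).card) := by
    calc P1 ≤ ∏ g ∈ lenIco d 0 n, C ^ d := by
          refine Finset.prod_le_prod (fun g _ => Finset.prod_nonneg fun i _ => hE.1 _ _)
            (fun g _ => ?_)
          calc ∏ i : Fin d, E (u (g ++ [i])) (u g) ≤ ∏ _i : Fin d, C :=
                Finset.prod_le_prod (fun i _ => hE.1 _ _) (fun i _ => hEC _ _)
            _ = C ^ d := by rw [Finset.prod_const, Finset.card_univ, Fintype.card_fin]
      _ = C ^ (d * (lenIco d 0 n).card) := by rw [Finset.prod_const, ← pow_mul, mul_comm]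
  have hQle : (1 : ℝ) ≤ C ^ d ^ n * Q := by
    calc (1 : ℝ) = ∏ _g ∈ lenEq d n, (1 : ℝ) := by rw [Finset.prod_const, one_pow]
      _ ≤ ∏ g ∈ lenEq d n, (C * w (u g)) :=
        Finset.prod_le_prod (fun g _ => zero_le_one) (fun g _ => hCw _)
      _ = C ^ d ^ n * Q := by rw [Finset.prod_mul_distrib, Finset.prod_const, card_lenEq]
  have step1 : w (u []) * (P1 * P2) ≤ (C * C ^ (d * (lenIco d 0 n).card)) * P2 := by
    rw [← mul_assoc]
    exact mul_le_mul_of_nonneg_right (mul_le_mul (hwC _) hP1le hP1nn hC0) hP2nn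
  have step2 : (C * C ^ (d * (lenIco d 0 n).card)) * P2
      ≤ ((C * C ^ (d * (lenIco d 0 n).card)) * P2) * (C ^ d ^ n * Q) := by
    nth_rewrite 1 [← mul_one ((C * C ^ (d * (lenIco d 0 n).card)) * P2)]
    exact mul_le_mul_of_nonneg_left hQle
      (mul_nonneg (mul_nonneg hC0 (pow_nonneg hC0 _)) hP2nn)
  calc w (u []) * (P1 * P2) ≤ ((C * C ^ (d * (lenIco d 0 n).card)) * P2) * (C ^ d ^ n * Q) :=
        le_trans step1 step2
    _ = C ^ (1 + d * (lenIco d 0 n).card + d ^ n) * (Q * P2) := by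
        rw [pow_add, pow_add, pow_one]; ring

lemma sum_rho_le (hE : AssumptionA E) (hw : ∀ a, 0 < w a) {n m : ℕ} (hnm : n ≤ m) :
    ∑ u ∈ Bfin d E 0 m, blockWeight d E w n m (rho d n m u)
      ≤ (Fintype.card A : ℝ) ^ (lenIco d 0 n).card * partFn d E w n m := by
  classical
  set Θ : (List (Fin d) → A) → ((lenIco d 0 n : Finset (List (Fin d))) → A) × (List (Fin d) → A) :=
    fun u => ((fun g => u g.val), rho d n m u) with hTheta
  have hinj : ∀ u ∈ Bfin d E 0 m, ∀ v ∈ Bfin d E 0 m, Θ u = Θ v → u = v := by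
    intro u hu v hv heq
    obtain ⟨-, -, -, hu2⟩ := mem_Bfin.1 hu
    obtain ⟨-, -, -, hv2⟩ := mem_Bfin.1 hv
    have h1 := congrArg Prod.fst heq
    have h2 := congrArg Prod.snd heq
    simp only [hTheta] at h1 h2
    funext g
    by_cases hg1 : g.length < n
    · have hmem : g ∈ lenIco d 0 n := mem_lenIco.2 ⟨Nat.zero_le _, hg1⟩
      exact congrFun h1 (⟨g, hmem⟩ : (lenIco d 0 n : Finset (List (Fin d))))
    · by_cases hg2 : g.length ≤ m
      · have := congrFun h2 g
        simp only [rho] at this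
        rwa [if_pos ⟨by omega, hg2⟩, if_pos ⟨by omega, hg2⟩] at this
      · rw [hu2 g (by omega), hv2 g (by omega)]
  calc ∑ u ∈ Bfin d E 0 m, blockWeight d E w n m (rho d n m u)
      = ∑ q ∈ Finset.image Θ (Bfin d E 0 m), blockWeight d E w n m q.2 := by
        rw [Finset.sum_image hinj]
    _ ≤ ∑ q ∈ (Finset.univ : Finset ((lenIco d 0 n : Finset (List (Fin d))) → A)) ×ˢ
          Bfin d E n m, blockWeight d E w n m q.2 := by
        apply Finset.sum_le_sum_of_subset_of_nonneg
        · intro q hq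
          obtain ⟨u, hu, rfl⟩ := Finset.mem_image.1 hq
          exact Finset.mem_product.2 ⟨Finset.mem_univ _,
            mem_Bfin.2 (rho_mem (mem_Bfin.1 hu))⟩
        · intro q hq _
          exact blockWeight_nonneg hw (mem_Bfin.1 (Finset.mem_product.1 hq).2)
    _ = (Fintype.card A : ℝ) ^ (lenIco d 0 n).card * partFn d E w n m := by
        rw [Finset.sum_product]
        have hxeq : ∀ x : ((lenIco d 0 n : Finset (List (Fin d))) → A),
            ∑ y ∈ Bfin d E n m, blockWeight d E w n m (x, y).2 = partFn d E w n m :=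
          fun x => (partFn_eq n m).symm
        rw [Finset.sum_congr rfl (fun x _ => hxeq x), Finset.sum_const, nsmul_eq_mul,
          Finset.card_univ, Fintype.card_fun, Fintype.card_coe]
        push_cast
        ring

lemma partFn_zero_le (hd : 1 ≤ d) {C : ℝ} (hC : 1 ≤ C) (hwC : ∀ a, w a ≤ C) (hEC : ∀ a b, E a b ≤ C)
    (hCw : ∀ a, 1 ≤ C * w a) (hcard : ((Fintype.card A : ℝ)) ≤ C)
    (hE : AssumptionA E) (hw : ∀ a, 0 < w a) {n m : ℕ} (hnm : n ≤ m) :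
    partFn d E w 0 m ≤ C ^ ((d + 3) * latCard d 0 n) * partFn d E w n m := by
  have hC0 : (0 : ℝ) ≤ C := le_trans zero_le_one hC
  have hN1 : (lenIco d 0 n).card ≤ latCard d 0 n := by
    rw [card_lenIco, latCard]
    exact Finset.sum_le_sum_of_subset (Finset.Ico_subset_Icc_self)
  have hdn : d ^ n ≤ latCard d 0 n := by
    rw [latCard]
    exact Finset.single_le_sum (f := fun i => d ^ i) (fun i _ => Nat.zero_le _)
      (Finset.mem_Icc.2 ⟨Nat.zero_le _, le_refl n⟩)
  have h1N : 1 ≤ latCard d 0 n := le_trans (Nat.one_le_pow _ _ (by omega)) hdn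
  have hexp : 1 + d * (lenIco d 0 n).card + d ^ n + (lenIco d 0 n).card
      ≤ (d + 3) * latCard d 0 n := by nlinarith [hN1, hdn, h1N]
  calc partFn d E w 0 m
      = ∑ u ∈ Bfin d E 0 m, blockWeight d E w 0 m u := partFn_eq 0 m
    _ ≤ ∑ u ∈ Bfin d E 0 m, C ^ (1 + d * (lenIco d 0 n).card + d ^ n) *
          blockWeight d E w n m (rho d n m u) :=
        Finset.sum_le_sum fun u _ => weight_rho_le hC hwC hEC hCw hE hw hnm u
    _ = C ^ (1 + d * (lenIco d 0 n).card + d ^ n) *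
          ∑ u ∈ Bfin d E 0 m, blockWeight d E w n m (rho d n m u) := by
        rw [Finset.mul_sum]
    _ ≤ C ^ (1 + d * (lenIco d 0 n).card + d ^ n) *
          ((Fintype.card A : ℝ) ^ (lenIco d 0 n).card * partFn d E w n m) := by
        apply mul_le_mul_of_nonneg_left (sum_rho_le hE hw hnm) (pow_nonneg hC0 _)
    _ ≤ C ^ (1 + d * (lenIco d 0 n).card + d ^ n) *
          (C ^ (lenIco d 0 n).card * partFn d E w n m) := by
        have := partFn_pos (d := d) hE hw n m
        have hcard0 : (0:ℝ) ≤ (Fintype.card A : ℝ) := Nat.cast_nonneg _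
        apply mul_le_mul_of_nonneg_left _ (pow_nonneg hC0 _)
        apply mul_le_mul_of_nonneg_right _ (le_of_lt this)
        exact pow_le_pow_left₀ hcard0 hcard _
    _ = C ^ (1 + d * (lenIco d 0 n).card + d ^ n + (lenIco d 0 n).card) *
          partFn d E w n m := by rw [pow_add]; ring
    _ ≤ C ^ ((d + 3) * latCard d 0 n) * partFn d E w n m := by
        apply mul_le_mul_of_nonneg_right _ (le_of_lt (partFn_pos (d := d) hE hw n m))
        exact pow_le_pow_right₀ hC hexp


lemma latCard_shift {n m : ℕ} (hnm : n ≤ m) :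
    latCard d n m = d ^ n * latCard d 0 (m - n) := by
  rw [latCard, latCard]
  have : Finset.Icc n m = Finset.map (addLeftEmbedding n) (Finset.Icc 0 (m - n)) := by
    rw [Finset.map_add_left_Icc]
    congr 1 <;> omega
  rw [this, Finset.sum_map, Finset.mul_sum]
  refine Finset.sum_congr rfl fun j hj => ?_
  rw [addLeftEmbedding_apply, pow_add]

lemma latCard_one_le (hd : 1 ≤ d) {n m : ℕ} (hnm : n ≤ m) : 1 ≤ latCard d n m := by
  calc 1 ≤ d ^ n := Nat.one_le_pow _ _ (by omega)
    _ ≤ latCard d n m := Finset.single_le_sum (f := fun i => d ^ i)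
        (fun i _ => Nat.zero_le _) (Finset.mem_Icc.2 ⟨le_refl n, hnm⟩)

lemma latCard_le_two_pow (hd : 2 ≤ d) (n : ℕ) : latCard d 0 n ≤ 2 * d ^ n := by
  induction n with
  | zero => simp [latCard]
  | succ k ih =>
      have : latCard d 0 (k + 1) = latCard d 0 k + d ^ (k + 1) := by
        rw [latCard, latCard, Finset.sum_Icc_succ_top (Nat.zero_le _)]
      rw [this]
      have : 2 * d ^ k ≤ d ^ (k + 1) := by
        rw [pow_succ, mul_comm 2 (d ^ k)]
        exact Nat.mul_le_mul_left _ hd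
      omega

lemma latCard_len_le {r : ℕ} : r + 1 ≤ latCard d 0 r ∨ d = 0 := by
  rcases Nat.eq_zero_or_pos d with h | h
  · right; exact h
  · left
    calc r + 1 = ∑ _i ∈ Finset.Icc 0 r, 1 := by
          rw [Finset.sum_const, smul_eq_mul, mul_one, Nat.card_Icc]; omega
    _ ≤ latCard d 0 r := Finset.sum_le_sum fun i _ => Nat.one_le_pow _ _ h

lemma latCard_split {n m : ℕ} (hnm : n ≤ m) :
    latCard d 0 m = (lenIco d 0 n).card + latCard d n m := by
  rw [latCard, latCard, card_lenIco, ← Finset.Ico_add_one_right_eq_Icc, ← Finset.Ico_add_one_right_eq_Icc]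
  exact (Finset.sum_Ico_consecutive _ (Nat.zero_le n) (by omega)).symm

end Stmt8Aux

/-- if `n_i ≤ m_i`, the sizes `|Λ_{n_i}^{m_i}|` are non-decreasing and tend
to infinity, and `m_i − n_i → ∞`, then `log ‖B_{n_i}^{m_i}‖_w / |Λ_{n_i}^{m_i}|` tends to
the topological pressure `P(X_E^{×d},E) = lim_n log ‖B_n‖_w / |Λ_n|`. -/
theorem stmt8 {A : Type*} [Fintype A] [Inhabited A] (d : ℕ) (hd : 2 ≤ d)
    (E : Matrix A A ℝ) (hE : AssumptionA E) (w : A → ℝ) (hw : ∀ a, 0 < w a)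
    (P : ℝ)
    (hP : Tendsto (fun n : ℕ => Real.log (partFn d E w 0 n) / (latCard d 0 n : ℝ))
      atTop (nhds P))
    (n m : ℕ → ℕ) (hnm : ∀ i, n i ≤ m i)
    (hmono : Monotone fun i => latCard d (n i) (m i))
    (htop : Tendsto (fun i => latCard d (n i) (m i)) atTop atTop)
    (hdiff : Tendsto (fun i => m i - n i) atTop atTop) :
    Tendsto (fun i : ℕ =>
        Real.log (partFn d E w (n i) (m i)) / (latCard d (n i) (m i) : ℝ))
      atTop (nhds P) := by
  classical
  obtain ⟨C, hC1, hwC, hEC, hCw, hcard⟩ := Stmt8Aux.exists_const E hw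
  have hC0 : (0 : ℝ) < C := lt_of_lt_of_le one_pos hC1
  have hd1 : 1 ≤ d := by omega
  have hdR : (0 : ℝ) < (d : ℝ) := by exact_mod_cast Nat.lt_of_lt_of_le Nat.zero_lt_one hd1
  set K : ℝ := ((d : ℝ) + 3) * Real.log C with hK
  have hK0 : 0 ≤ K := mul_nonneg (by positivity) (Real.log_nonneg hC1)
  have hpos : ∀ n' m' : ℕ, n' ≤ m' → (0 : ℝ) < (latCard d n' m' : ℝ) := by
    intro n' m' h
    have := Stmt8Aux.latCard_one_le hd1 h
    exact_mod_cast Nat.lt_of_lt_of_le Nat.zero_lt_one this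
  set L : ℕ → ℝ := fun i =>
    Real.log (partFn d E w (n i) (m i)) / (latCard d (n i) (m i) : ℝ) with hLdef
  set U : ℕ → ℝ := fun i =>
    Real.log (partFn d E w 0 (m i - n i)) / (latCard d 0 (m i - n i) : ℝ) with hUdef
  set V : ℕ → ℝ := fun i =>
    (Real.log (partFn d E w 0 (m i)) - K * (latCard d 0 (n i) : ℝ)) /
      (latCard d (n i) (m i) : ℝ) with hVdef
  -- upper bound
  have hLU : ∀ i, L i ≤ U i := by
    intro i
    have hdp : (0 : ℝ) < (d : ℝ) ^ n i := pow_pos hdR _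
    have hk0 : (0 : ℝ) < (latCard d 0 (m i - n i) : ℝ) := hpos 0 _ (Nat.zero_le _)
    have hsh : (latCard d (n i) (m i) : ℝ) =
        (d : ℝ) ^ n i * (latCard d 0 (m i - n i) : ℝ) := by
      have := Stmt8Aux.latCard_shift (d := d) (hnm i)
      exact_mod_cast congrArg (fun x : ℕ => (x : ℝ)) this
    have hlog : Real.log (partFn d E w (n i) (m i)) ≤
        (d : ℝ) ^ n i * Real.log (partFn d E w 0 (m i - n i)) := by
      have h1 := Stmt8Aux.partFn_le (d := d) hE hw (hnm i)
      have h2 := Real.log_le_log (Stmt8Aux.partFn_pos hE hw (n i) (m i)) h1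
      rw [Real.log_pow] at h2
      calc Real.log (partFn d E w (n i) (m i))
          ≤ ((d ^ n i : ℕ) : ℝ) * Real.log (partFn d E w 0 (m i - n i)) := h2
        _ = (d : ℝ) ^ n i * Real.log (partFn d E w 0 (m i - n i)) := by push_cast; ring
    show Real.log (partFn d E w (n i) (m i)) / (latCard d (n i) (m i) : ℝ) ≤ _
    rw [hsh]
    calc Real.log (partFn d E w (n i) (m i)) / ((d : ℝ) ^ n i * (latCard d 0 (m i - n i) : ℝ))
        ≤ ((d : ℝ) ^ n i * Real.log (partFn d E w 0 (m i - n i))) /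
            ((d : ℝ) ^ n i * (latCard d 0 (m i - n i) : ℝ)) :=
          by gcongr
      _ = U i := by rw [mul_div_mul_left _ _ (ne_of_gt hdp)]
  -- lower bound
  have hVL : ∀ i, V i ≤ L i := by
    intro i
    have hN : (0 : ℝ) < (latCard d (n i) (m i) : ℝ) := hpos _ _ (hnm i)
    have hSn := Stmt8Aux.partFn_pos (d := d) hE hw (n i) (m i)
    have hnum : Real.log (partFn d E w 0 (m i)) - K * (latCard d 0 (n i) : ℝ) ≤
        Real.log (partFn d E w (n i) (m i)) := by
      have h1 := Stmt8Aux.partFn_zero_le (d := d) hd1 hC1 hwC hEC hCw hcard hE hw (hnm i)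
      have h2 := Real.log_le_log (Stmt8Aux.partFn_pos hE hw 0 (m i)) h1
      rw [Real.log_mul (by positivity) (ne_of_gt hSn), Real.log_pow] at h2
      have h3 : (((d + 3) * latCard d 0 (n i) : ℕ) : ℝ) * Real.log C =
          K * (latCard d 0 (n i) : ℝ) := by rw [hK]; push_cast; ring
      linarith
    exact div_le_div_of_nonneg_right hnum hN.le
  -- limits
  have hUlim : Tendsto U atTop (nhds P) := hP.comp hdiff
  have hm : Tendsto m atTop atTop :=
    tendsto_atTop_mono (fun i => Nat.sub_le (m i) (n i)) hdiff
  have hz : Tendsto (fun i => 2 / (((m i - n i : ℕ) : ℝ) + 1)) atTop (nhds 0) := by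
    have base : Tendsto (fun k : ℕ => 2 / ((k : ℝ) + 1)) atTop (nhds 0) := by
      have h1 := tendsto_one_div_add_atTop_nhds_zero_nat.const_mul (2 : ℝ)
      simp only [mul_zero] at h1
      refine h1.congr fun k => ?_
      rw [mul_one_div]
    exact base.comp hdiff
  set c : ℕ → ℝ := fun i => (latCard d 0 (n i) : ℝ) / (latCard d (n i) (m i) : ℝ) with hcdef
  have hcbound : ∀ i, c i ≤ 2 / (((m i - n i : ℕ) : ℝ) + 1) := by
    intro i
    have hdp : (0 : ℝ) < (d : ℝ) ^ n i := pow_pos hdR _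
    have hkp : (0 : ℝ) < ((m i - n i : ℕ) : ℝ) + 1 := by positivity
    have hnum : (latCard d 0 (n i) : ℝ) ≤ (d : ℝ) ^ n i * 2 := by
      have := Stmt8Aux.latCard_le_two_pow (d := d) hd (n i)
      have h2 : ((latCard d 0 (n i) : ℕ) : ℝ) ≤ ((2 * d ^ n i : ℕ) : ℝ) := by exact_mod_cast this
      calc (latCard d 0 (n i) : ℝ) ≤ ((2 * d ^ n i : ℕ) : ℝ) := h2
        _ = (d : ℝ) ^ n i * 2 := by push_cast; ring
    have hden : (d : ℝ) ^ n i * (((m i - n i : ℕ) : ℝ) + 1) ≤ (latCard d (n i) (m i) : ℝ) := by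
      have hsh := Stmt8Aux.latCard_shift (d := d) (hnm i)
      have hlen := (Stmt8Aux.latCard_len_le (d := d) (r := m i - n i)).resolve_right (by omega)
      have : d ^ n i * (m i - n i + 1) ≤ latCard d (n i) (m i) := by
        rw [hsh]; exact Nat.mul_le_mul_left _ hlen
      calc (d : ℝ) ^ n i * (((m i - n i : ℕ) : ℝ) + 1)
          = ((d ^ n i * (m i - n i + 1) : ℕ) : ℝ) := by push_cast; ring
        _ ≤ (latCard d (n i) (m i) : ℝ) := by exact_mod_cast this
    calc c i ≤ ((d : ℝ) ^ n i * 2) / ((d : ℝ) ^ n i * (((m i - n i : ℕ) : ℝ) + 1)) :=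
          div_le_div₀ (by positivity) hnum (mul_pos hdp hkp) hden
      _ = 2 / (((m i - n i : ℕ) : ℝ) + 1) := mul_div_mul_left _ _ (ne_of_gt hdp)
  have hcnonneg : ∀ i, 0 ≤ c i := fun i =>
    div_nonneg (Nat.cast_nonneg _) (Nat.cast_nonneg _)
  have hclim : Tendsto c atTop (nhds 0) :=
    tendsto_of_tendsto_of_tendsto_of_le_of_le tendsto_const_nhds hz hcnonneg hcbound
  set b : ℕ → ℝ := fun i => (latCard d 0 (m i) : ℝ) / (latCard d (n i) (m i) : ℝ) with hbdef
  have hb1 : ∀ i, 1 ≤ b i := by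
    intro i
    have hN : (0 : ℝ) < (latCard d (n i) (m i) : ℝ) := hpos _ _ (hnm i)
    rw [hbdef, one_le_div hN]
    have := Stmt8Aux.latCard_split (d := d) (hnm i)
    have h2 : latCard d (n i) (m i) ≤ latCard d 0 (m i) := by omega
    exact_mod_cast h2
  have hbc : ∀ i, b i ≤ 1 + c i := by
    intro i
    have hN : (0 : ℝ) < (latCard d (n i) (m i) : ℝ) := hpos _ _ (hnm i)
    have hsplit := Stmt8Aux.latCard_split (d := d) (hnm i)
    have hXle : (Stmt8Aux.lenIco d 0 (n i)).card ≤ latCard d 0 (n i) := by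
      rw [Stmt8Aux.card_lenIco, latCard]
      exact Finset.sum_le_sum_of_subset Finset.Ico_subset_Icc_self
    have hMle : latCard d 0 (m i) ≤ latCard d 0 (n i) + latCard d (n i) (m i) := by omega
    have : b i ≤ ((latCard d 0 (n i) : ℝ) + (latCard d (n i) (m i) : ℝ)) /
        (latCard d (n i) (m i) : ℝ) := by
      refine div_le_div_of_nonneg_right ?_ hN.le
      push_cast
      exact_mod_cast hMle
    calc b i ≤ ((latCard d 0 (n i) : ℝ) + (latCard d (n i) (m i) : ℝ)) /
          (latCard d (n i) (m i) : ℝ) := this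
      _ = c i + 1 := by rw [add_div, div_self (ne_of_gt hN)]
      _ = 1 + c i := by ring
  have hblim : Tendsto b atTop (nhds 1) := by
    have h1 : Tendsto (fun i => 1 + c i) atTop (nhds 1) := by
      have := (tendsto_const_nhds (x := (1:ℝ)) (f := atTop (α := ℕ))).add hclim
      simpa using this
    exact tendsto_of_tendsto_of_tendsto_of_le_of_le tendsto_const_nhds h1 hb1 hbc
  have halim : Tendsto (fun i => Real.log (partFn d E w 0 (m i)) / (latCard d 0 (m i) : ℝ))
      atTop (nhds P) := hP.comp hm
  have hVeq : ∀ i, V i = Real.log (partFn d E w 0 (m i)) / (latCard d 0 (m i) : ℝ) * b i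
      - K * c i := by
    intro i
    have hN : (latCard d (n i) (m i) : ℝ) ≠ 0 := ne_of_gt (hpos _ _ (hnm i))
    have hM : (latCard d 0 (m i) : ℝ) ≠ 0 := ne_of_gt (hpos 0 _ (Nat.zero_le _))
    rw [hVdef, hbdef, hcdef]
    field_simp
  have hVlim : Tendsto V atTop (nhds P) := by
    have h1 : Tendsto (fun i => Real.log (partFn d E w 0 (m i)) / (latCard d 0 (m i) : ℝ) * b i
        - K * c i) atTop (nhds (P * 1 - K * 0)) :=
      (halim.mul hblim).sub (hclim.const_mul K)
    simp only [mul_one, mul_zero, sub_zero] at h1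
    exact (Tendsto.congr (fun i => (hVeq i).symm) h1)
  exact tendsto_of_tendsto_of_tendsto_of_le_of_le hVlim hUlim hVL hLU
end

section
/- Let d ≥ 2 and n ≥ 0 be integers, let v' be a level-n distribution vector of X_E^{×d} (i.e., v' = π_n(t) for some t ∈ X_E^{×d}), and let Q ∈ Υ_A be such that (v',Q) is typical. Then there exists Q' ∈ Υ_A such that ((v', Q'v'), Q') ∈ Γ*_n^{n+1}, Q'_{a,b} = 0 whenever Q_{a,b} = 0, Q'_{a,b} = Q_{a,b} whenever v'_b = 0, and |Q_{a,b} − Q'_{a,b}| ≤ 1/(|Δ_{n+1}|·v'_b) for all a,b ∈ A with v'_b > 0. -/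
open Filter Topology

/-- The level-`n` distribution vector `π_n(t)`: frequencies of each symbol on level `n`. -/
noncomputable def pivec {A : Type*} (d n : ℕ) (t : List (Fin d) → A) : A → ℝ :=
  fun a => (Nat.card {g : List (Fin d) // g.length = n ∧ t g = a} : ℝ) / (d : ℝ) ^ n

/-- The transition matrix `Q_n(t)` from level `n` to level `n+1`: `Q_n(t)_{a,b}` is the
proportion of vertices labeled `a` among all children of level-`n` vertices labeled `b`,
and `E_{a,b}/Σ_c E_{c,b}` if no level-`n` vertex is labeled `b`. -/
noncomputable def Qmat {A : Type*} [Fintype A] (d : ℕ) (E : Matrix A A ℝ) (n : ℕ)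
    (t : List (Fin d) → A) : Matrix A A ℝ :=
  fun a b =>
    if Nat.card {g : List (Fin d) // g.length = n ∧ t g = b} = 0 then
      E a b / ∑ c, E c b
    else
      (Nat.card {p : List (Fin d) × Fin d //
          p.1.length = n ∧ t p.1 = b ∧ t (p.1 ++ [p.2]) = a} : ℝ) /
        ((d : ℝ) * (Nat.card {g : List (Fin d) // g.length = n ∧ t g = b} : ℝ))

/-- A pair `(v,Q)` is typical with respect to `E`. -/
def Typical {A : Type*} [Fintype A] (E : Matrix A A ℝ) (v : A → ℝ)
    (Q : Matrix A A ℝ) : Prop :=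
  (∀ a b, E a b = 0 → Q a b = 0) ∧ ∀ a b, v b = 0 → Q a b = E a b / ∑ c, E c b

/-! Write `v' = π_n(t)` and let `N_b` be the number of level-`n` vertices of `t` labeled `b`.
Each column `Q_{·,b}` is rounded to nonnegative integers `k_{b,a}` summing to `d N_b`, with
`|d N_b Q_{a,b} - k_{b,a}| ≤ 1` and `k_{b,a} = 0` wherever `Q_{a,b} = 0`. By typicality
`Q_{a,b} > 0` forces `E_{a,b} > 0`, so the `d N_b` children of the `b`-labeled level-`n` vertices
may be relabeled with exactly `k_{b,a}` of them labeled `a`; the tree is then completed above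
level `n + 1`. The new tree `t'` has `π_n(t') = v'`, and `Q' := Q_n(t')` has
`Q'_{a,b} = k_{b,a} / (d N_b) = k_{b,a} / (d^{n+1} v'_b)`. -/

open Finset

lemma abs_sub_floor_add_sub_floor_le {x y : ℝ} (hx : 0 ≤ x) (hy : 0 ≤ y) :
    |y - ((⌊x + y⌋₊ - ⌊x⌋₊ : ℕ) : ℝ)| ≤ 1 := by
  rw [Nat.cast_sub (Nat.floor_mono (le_add_of_nonneg_right hy)), abs_le]
  constructor <;> linarith [Nat.floor_le hx, Nat.lt_floor_add_one x,
    Nat.floor_le (add_nonneg hx hy), Nat.lt_floor_add_one (x + y)]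

lemma abs_sub_div_le_one_div {x k M : ℝ} (hM : 0 < M) (h : |M * x - k| ≤ 1) :
    |x - k / M| ≤ 1 / M := by
  rw [show x - k / M = (M * x - k) / M by field_simp, abs_div, abs_of_pos hM]
  gcongr

/-- Cumulative rounding: the floors of the scaled partial sums telescope to `M`. -/
lemma exists_nat_approx_of_sum_eq_one {A : Type*} [Fintype A] (q : A → ℝ) (hq0 : ∀ a, 0 ≤ q a)
    (hq1 : ∑ a, q a = 1) (M : ℕ) :
    ∃ k : A → ℕ, ∑ a, k a = M ∧ (∀ a, q a = 0 → k a = 0) ∧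
      ∀ a, |M * q a - k a| ≤ 1 := by
  classical
  let e := Fintype.equivFin A
  let c : ℕ → ℝ := fun i => ∑ a with (e a : ℕ) < i, q a
  let F : ℕ → ℕ := fun i => ⌊(M : ℝ) * c i⌋₊
  have hc_mono : Monotone c := fun i j hij =>
    sum_le_sum_of_subset_of_nonneg (fun a => by simp only [mem_filter, mem_univ, true_and]; omega)
      (fun a _ _ => hq0 a)
  have hF_mono : Monotone F := fun i j hij =>
    Nat.floor_mono (mul_le_mul_of_nonneg_left (hc_mono hij) (Nat.cast_nonneg M))
  have hc_succ : ∀ a, c (e a + 1) = c (e a) + q a := by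
    intro a
    have : univ.filter (fun b => (e b : ℕ) < e a + 1) =
        insert a (univ.filter fun b => (e b : ℕ) < e a) := by
      ext b
      simp only [mem_filter, mem_univ, true_and, mem_insert, Nat.lt_succ_iff_lt_or_eq,
        Fin.val_inj, e.apply_eq_iff_eq]
      tauto
    rw [show c (e a + 1) = _ from congrArg (∑ b ∈ ·, q b) this, sum_insert (by simp), add_comm]
  refine ⟨fun a => F (e a + 1) - F (e a), ?_, fun a ha => ?_, fun a => ?_⟩
  · have hc_top : c (Fintype.card A) = 1 := by
      simp only [c, Fin.is_lt, filter_true, hq1]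
    have hc_zero : c 0 = 0 := by simp [c]
    calc ∑ a, (F (e a + 1) - F (e a))
        = ∑ i ∈ range (Fintype.card A), (F (i + 1) - F i) := by
          rw [e.sum_comp (fun i : Fin _ => F (i + 1) - F i),
            Fin.sum_univ_eq_sum_range (fun i => F (i + 1) - F i)]
      _ = M := by simp [sum_range_tsub hF_mono, F, hc_top, hc_zero]
  · simp only [F, hc_succ, ha, add_zero, tsub_self]
  · simp only [F, hc_succ, mul_add]
    exact abs_sub_floor_add_sub_floor_le
      (mul_nonneg (Nat.cast_nonneg M) (sum_nonneg fun a _ => hq0 a))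
      (mul_nonneg (Nat.cast_nonneg M) (hq0 a))

instance Subtype.finite_and_left {α : Type*} (P Q : α → Prop) [Finite {x // P x}] :
    Finite {x // P x ∧ Q x} :=
  Finite.of_injective (fun x => (⟨x.1, x.2.1⟩ : {x // P x})) fun x y h => by
    simpa [Subtype.ext_iff] using h

instance List.finite_subtype_length_eq (α : Type*) [Finite α] (n : ℕ) :
    Finite {l : List α // l.length = n} :=
  (List.finite_length_eq α n).to_subtype

instance List.finite_subtype_fst_length_eq (α β : Type*) [Finite α] [Finite β] (n : ℕ) :
    Finite {p : List α × β // p.1.length = n} :=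
  Finite.of_equiv _
    (Equiv.prodSubtypeFstEquivSubtypeProd (p := fun l : List α => l.length = n)).symm

def List.snocEquiv (α : Type*) (n : ℕ) :
    {p : List α × α // p.1.length = n} ≃ {l : List α // l.length = n + 1} where
  toFun p := ⟨p.1.1 ++ [p.1.2], by simp [p.2]⟩
  invFun l := ⟨(l.1.dropLast, l.1.getLast (List.ne_nil_of_length_eq_add_one l.2)), by simp [l.2]⟩
  left_inv p := by simp
  right_inv l := Subtype.ext (List.dropLast_append_getLast _)

lemma List.natCard_length_succ_and {α : Type*} (n : ℕ) (P : List α → Prop) :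
    Nat.card {l : List α // l.length = n + 1 ∧ P l} =
      Nat.card {p : List α × α // p.1.length = n ∧ P (p.1 ++ [p.2])} :=
  Nat.card_congr <| ((Equiv.subtypeSubtypeEquivSubtypeInter _ P).symm.trans
    ((List.snocEquiv α n).subtypeEquiv (p := fun p => P (p.1.1 ++ [p.1.2]))
      fun _ => Iff.rfl).symm).trans
      (Equiv.subtypeSubtypeEquivSubtypeInter (fun p : List α × α => p.1.length = n)
        fun p => P (p.1 ++ [p.2]))

lemma sum_natCard_subtype_and_eq {α B : Type*} [Fintype B] (P : α → Prop) [Finite {x // P x}]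
    (f : α → B) : ∑ b, Nat.card {x // P x ∧ f x = b} = Nat.card {x // P x} := by
  rw [← Nat.card_sigma]
  exact Nat.card_congr <| (Equiv.sigmaCongrRight fun b =>
    (Equiv.subtypeSubtypeEquivSubtypeInter P (f · = b)).symm).trans
      (Equiv.sigmaFiberEquiv fun x : {x // P x} => f x)

lemma exists_fun_natCard_and_eq {α A : Type*} [Fintype A] [Nonempty A] (P : α → Prop)
    [Finite {x // P x}] (k : A → ℕ) (hk : ∑ a, k a = Nat.card {x // P x}) :
    ∃ f : α → A, ∀ a, Nat.card {x // P x ∧ f x = a} = k a := by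
  classical
  obtain ⟨e⟩ : Nonempty ({x // P x} ≃ Σ a, Fin (k a)) := by
    rw [← Finite.card_eq, Nat.card_sigma]
    simp [hk]
  refine ⟨fun x => if h : P x then (e ⟨x, h⟩).1 else Classical.arbitrary A, fun a => ?_⟩
  calc Nat.card {x // P x ∧ (if h : P x then (e ⟨x, h⟩).1 else Classical.arbitrary A) = a}
      = Nat.card {x : {x // P x} // (e x).1 = a} :=
        Nat.card_congr <| (Equiv.subtypeSubtypeEquivSubtypeInter P _).symm.trans
          (Equiv.subtypeEquivRight fun x => by simp [x.2])
    _ = Nat.card {s : Σ a, Fin (k a) // s.1 = a} :=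
        Nat.card_congr (e.subtypeEquiv fun _ => Iff.rfl)
    _ = k a := by rw [Nat.card_congr (Equiv.sigmaSubtype a), Nat.card_fin]

lemma exists_fun_natCard_fiberwise {α A B : Type*} [Fintype A] [Nonempty A] (P : α → Prop)
    [Finite {x // P x}] (g : α → B) (k : B → A → ℕ)
    (hk : ∀ b, ∑ a, k b a = Nat.card {x // P x ∧ g x = b}) :
    ∃ f : α → A, ∀ b a, Nat.card {x // P x ∧ g x = b ∧ f x = a} = k b a := by
  choose f hf using fun b => exists_fun_natCard_and_eq _ (k b) (hk b)
  refine ⟨fun x => f (g x) x, fun b a => ?_⟩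
  rw [← hf b a]
  exact Nat.card_congr <| Equiv.subtypeEquivRight fun x => by
    constructor
    · rintro ⟨hP, rfl, h⟩; exact ⟨⟨hP, rfl⟩, h⟩
    · rintro ⟨⟨hP, rfl⟩, h⟩; exact ⟨hP, rfl, h⟩

section Counting

variable {A : Type*} {d : ℕ}

noncomputable def levelCount (d n : ℕ) (t : List (Fin d) → A) (b : A) : ℕ :=
  Nat.card {g : List (Fin d) // g.length = n ∧ t g = b}

noncomputable def childCount (d n : ℕ) (t : List (Fin d) → A) (b a : A) : ℕ :=
  Nat.card {p : List (Fin d) × Fin d // p.1.length = n ∧ t p.1 = b ∧ t (p.1 ++ [p.2]) = a}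

lemma pivec_apply (n : ℕ) (t : List (Fin d) → A) (b : A) :
    pivec d n t b = levelCount d n t b / (d : ℝ) ^ n := rfl

lemma Qmat_apply [Fintype A] (E : Matrix A A ℝ) (n : ℕ) (t : List (Fin d) → A) (a b : A) :
    Qmat d E n t a b = if levelCount d n t b = 0 then E a b / ∑ c, E c b
      else childCount d n t b a / (d * levelCount d n t b) := rfl

lemma levelCount_congr {n : ℕ} {t t' : List (Fin d) → A} (h : ∀ g, g.length = n → t' g = t g) :
    levelCount d n t' = levelCount d n t :=
  funext fun b => Nat.card_congr <| Equiv.subtypeEquivRight fun g => by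
    constructor <;> rintro ⟨hg, rfl⟩ <;> simp [hg, h g hg]

lemma pivec_eq_zero_iff (hd : d ≠ 0) {n : ℕ} {t : List (Fin d) → A} {b : A} :
    pivec d n t b = 0 ↔ levelCount d n t b = 0 := by
  simp [pivec_apply, hd]

lemma natCard_children_eq (n : ℕ) (t : List (Fin d) → A) (b : A) :
    Nat.card {p : List (Fin d) × Fin d // p.1.length = n ∧ t p.1 = b} =
      d * levelCount d n t b := by
  rw [levelCount, mul_comm, Nat.card_congr (Equiv.prodSubtypeFstEquivSubtypeProd (β := Fin d)
    (p := fun g : List (Fin d) => g.length = n ∧ t g = b)), Nat.card_prod, Nat.card_fin]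

lemma sum_childCount_left [Fintype A] (n : ℕ) (t : List (Fin d) → A) (b : A) :
    ∑ a, childCount d n t b a = d * levelCount d n t b := by
  simp only [childCount, ← and_assoc]
  rw [sum_natCard_subtype_and_eq, natCard_children_eq]

lemma sum_childCount_right [Fintype A] (n : ℕ) (t : List (Fin d) → A) (a : A) :
    ∑ b, childCount d n t b a = levelCount d (n + 1) t a := by
  rw [levelCount, List.natCard_length_succ_and, ← sum_natCard_subtype_and_eq _ fun p => t p.1]
  exact sum_congr rfl fun b _ => Nat.card_congr <| Equiv.subtypeEquivRight fun p => by tauto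

lemma childCount_eq_zero_of_levelCount_eq_zero [Fintype A] {n : ℕ} {t : List (Fin d) → A}
    {b : A} (h : levelCount d n t b = 0) (a : A) : childCount d n t b a = 0 := by
  have hsum := sum_childCount_left n t b
  rw [h, mul_zero, sum_eq_zero_iff] at hsum
  exact hsum a (mem_univ a)

lemma isColStochastic_Qmat [Fintype A] (hd : d ≠ 0) {E : Matrix A A ℝ}
    (hE0 : ∀ a b, 0 ≤ E a b) (hEcol : ∀ b, 0 < ∑ a, E a b) (n : ℕ) (t : List (Fin d) → A) :
    IsColStochastic (Qmat d E n t) := by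
  refine ⟨fun a b => ?_, fun b => ?_⟩ <;> simp only [Qmat_apply] <;> split_ifs with h
  · exact div_nonneg (hE0 a b) (hEcol b).le
  · positivity
  · rw [← sum_div, div_self (hEcol b).ne']
  · rw [← sum_div, ← Nat.cast_sum, sum_childCount_left, Nat.cast_mul, div_self]
    positivity

lemma pivec_succ_eq_mulVec [Fintype A] (hd : d ≠ 0) (E : Matrix A A ℝ) (n : ℕ)
    (t : List (Fin d) → A) : pivec d (n + 1) t = (Qmat d E n t).mulVec (pivec d n t) := by
  funext a
  simp only [Matrix.mulVec, dotProduct, pivec_apply]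
  rw [← sum_childCount_right, Nat.cast_sum, sum_div]
  refine sum_congr rfl fun b _ => ?_
  rw [Qmat_apply]
  split_ifs with h
  · simp [h, childCount_eq_zero_of_levelCount_eq_zero h]
  · field_simp
    ring

end Counting

/-- Above level `n + 1` every vertex labeled `b` gives all its children one label `next b` with
`E (next b) b > 0`. -/
lemma exists_mem_treeX_extend {A : Type*} {d : ℕ} {E : Matrix A A ℝ}
    (hEcol : ∀ b, ∃ a, 0 < E a b) {t : List (Fin d) → A} (ht : t ∈ treeX d E) (n : ℕ)
    (s : List (Fin d) → A) (hs : ∀ g i, g.length = n → 0 < E (s (g ++ [i])) (t g)) :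
    ∃ t' ∈ treeX d E, (∀ g, g.length ≤ n → t' g = t g) ∧ ∀ g, g.length = n + 1 → t' g = s g := by
  choose next hnext using hEcol
  refine ⟨fun g => if g.length ≤ n then t g else next^[g.length - (n + 1)] (s (g.take (n + 1))),
    fun g i => ?_, fun g hg => if_pos hg, fun g hg => by simp [hg, List.take_of_length_le]⟩
  rcases lt_trichotomy g.length n with hlt | heq | hgt
  · simp only [List.length_append, List.length_singleton, if_pos hlt.le,
      if_pos (by omega : g.length + 1 ≤ n)]
    exact ht g i
  · simp only [List.length_append, List.length_singleton, heq, if_pos le_rfl,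
      if_neg (by omega : ¬ n + 1 ≤ n), Nat.sub_self, Function.iterate_zero, id,
      List.take_of_length_le (by simp [heq] : (g ++ [i]).length ≤ n + 1)]
    exact hs g i heq
  · have hsucc : g.length + 1 - (n + 1) = g.length - (n + 1) + 1 := by omega
    simp only [List.length_append, List.length_singleton, if_neg (by omega : ¬ g.length ≤ n),
      if_neg (by omega : ¬ g.length + 1 ≤ n), hsucc, Function.iterate_succ_apply',
      List.take_append_of_le_length (by omega : n + 1 ≤ g.length)]
    exact hnext _

lemma exists_mem_treeX_childCount_eq {A : Type*} [Fintype A] {d : ℕ} {E : Matrix A A ℝ}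
    (hEcol : ∀ b, ∃ a, 0 < E a b) {t : List (Fin d) → A} (ht : t ∈ treeX d E) (n : ℕ)
    (k : A → A → ℕ) (hk_sum : ∀ b, ∑ a, k b a = d * levelCount d n t b)
    (hk_pos : ∀ b a, k b a ≠ 0 → 0 < E a b) :
    ∃ t' ∈ treeX d E, levelCount d n t' = levelCount d n t ∧
      ∀ b a, childCount d n t' b a = k b a := by
  have : Nonempty A := ⟨t []⟩
  obtain ⟨s, hs⟩ := exists_fun_natCard_fiberwise (fun h : List (Fin d) => h.length = n + 1)
    (fun h => t h.dropLast) k fun b => by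
      simp [hk_sum, List.natCard_length_succ_and, natCard_children_eq]
  have hsE : ∀ g i, g.length = n → 0 < E (s (g ++ [i])) (t g) := by
    intro g i hg
    refine hk_pos _ _ (hs _ _ ▸ Nat.card_pos_iff.2 ⟨?_, inferInstance⟩).ne'
    exact ⟨⟨g ++ [i], by simp [hg], by simp, rfl⟩⟩
  obtain ⟨t', ht', hlow, hsucc⟩ := exists_mem_treeX_extend hEcol ht n s hsE
  refine ⟨t', ht', levelCount_congr fun g hg => hlow g hg.le, fun b a => ?_⟩
  rw [← hs b a, childCount, List.natCard_length_succ_and]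
  exact Nat.card_congr <| Equiv.subtypeEquivRight fun p => by
    constructor <;> rintro ⟨hp, h⟩ <;>
      simp_all [hlow p.1 hp.le, hsucc (p.1 ++ [p.2]) (by simp [hp])]

/-- discretization of a typical pair `(v',Q)` by a realizable transition
matrix `Q'` with entrywise error at most `1/(|Δ_{n+1}|·v'_b)`. -/
theorem stmt11 {A : Type*} [Fintype A] (d : ℕ) (hd : 2 ≤ d) (E : Matrix A A ℝ)
    (hE : AssumptionA E) (n : ℕ) (v' : A → ℝ)
    (hv : ∃ t ∈ treeX d E, v' = pivec d n t)
    (Q : Matrix A A ℝ) (hQ : IsColStochastic Q) (htyp : Typical E v' Q) :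
    ∃ Q' : Matrix A A ℝ, IsColStochastic Q' ∧
      (∃ t ∈ treeX d E, pivec d n t = v' ∧ pivec d (n + 1) t = Q'.mulVec v' ∧
        Qmat d E n t = Q') ∧
      (∀ a b, Q a b = 0 → Q' a b = 0) ∧
      (∀ a b, v' b = 0 → Q' a b = Q a b) ∧
      ∀ a b, 0 < v' b → |Q a b - Q' a b| ≤ 1 / ((d : ℝ) ^ (n + 1) * v' b) := by
  obtain ⟨t, ht, rfl⟩ := hv
  have hd0 : d ≠ 0 := by omega
  have hEcol (b : A) : ∃ a, 0 < E a b := by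
    obtain ⟨a, -, ha⟩ := exists_lt_of_sum_lt (s := univ) (f := 0) (g := (E · b))
      (by simpa using hE.2.1 b)
    exact ⟨a, ha⟩
  choose k hk_sum hk_zero hk_err using fun b =>
    exists_nat_approx_of_sum_eq_one (Q · b) (hQ.1 · b) (hQ.2 b) (d * levelCount d n t b)
  obtain ⟨t', ht', hN, hC⟩ := exists_mem_treeX_childCount_eq hEcol ht n k hk_sum
    fun b a hk => (hE.1 a b).lt_of_ne' fun hE0 => hk (hk_zero b a (htyp.1 a b hE0))
  have hpiv : pivec d n t' = pivec d n t := funext fun b => by rw [pivec_apply, pivec_apply, hN]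
  refine ⟨Qmat d E n t', isColStochastic_Qmat hd0 hE.1 hE.2.1 n t',
    ⟨t', ht', hpiv, hpiv ▸ pivec_succ_eq_mulVec hd0 E n t', rfl⟩, fun a b hQ0 => ?_,
    fun a b hv0 => ?_, fun a b hvb => ?_⟩ <;> simp only [Qmat_apply, hN, hC]
  · split_ifs with h
    · rw [← htyp.2 a b ((pivec_eq_zero_iff hd0).2 h), hQ0]
    · simp [hk_zero b a hQ0]
  · rw [if_pos ((pivec_eq_zero_iff hd0).1 hv0), htyp.2 a b hv0]
  · have hN0 : levelCount d n t b ≠ 0 := mt (pivec_eq_zero_iff hd0).2 hvb.ne'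
    rw [if_neg hN0, show (d : ℝ) ^ (n + 1) * pivec d n t b = d * levelCount d n t b by
      rw [pivec_apply, pow_succ]; field_simp]
    exact abs_sub_div_le_one_div (by positivity) (by exact_mod_cast hk_err b a)
end

section
/- Let d > 1 be real and k ≥ 1 an integer. For every π ∈ Γ_A and every P = (P^{(0)},…,P^{(k−1)}) ∈ Υ_A^k with P^{(j)}_{a,b} = 0 whenever E_{a,b} = 0, one has F_k(π,P;1/d,E) ≤ (λ^{(k)})^T π, with equality when P^{(j)} = P*^{(j)} for all 0 ≤ j ≤ k−1; in particular the maximum of F_k over all such (π,P) equals max_{a∈A} λ^{(k)}_a. -/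
open Filter Topology

/-- The Kullback–Leibler divergence vector `D_KL(Q‖M)_b = Σ_a Q_{a,b} log(Q_{a,b}/M_{a,b})`
(the convention `0 · log(0/0) = 0` is automatic). -/
noncomputable def DKL {A : Type*} [Fintype A] (Q M : Matrix A A ℝ) : A → ℝ :=
  fun b => ∑ a, Q a b * Real.log (Q a b / M a b)

/-- The vectors `λ^{(i)}`: `λ^{(0)} = 0` and
`λ^{(i)}_a = ((d−1)/d^i) log Σ_b e^{(d^i/(d−1)) λ^{(i−1)}_b} E_{b,a}` (the summands with
`E_{b,a} = 0` vanish, so the sum may be taken over all of `A`). -/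
noncomputable def lam {A : Type*} [Fintype A] (E : Matrix A A ℝ) (d : ℝ) : ℕ → A → ℝ
  | 0 => fun _ => 0
  | i + 1 => fun a =>
      ((d - 1) / d ^ (i + 1)) *
        Real.log (∑ b, Real.exp (d ^ (i + 1) / (d - 1) * lam E d i b) * E b a)

/-- The optimal transition matrices `P*^{(i)}`. -/
noncomputable def Pstar {A : Type*} [Fintype A] (E : Matrix A A ℝ) (d : ℝ) (i : ℕ) :
    Matrix A A ℝ :=
  fun a b =>
    if 0 < E a b then
      Real.exp (d ^ (i + 1) / (d - 1) * lam E d i a) * E a b /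
        ∑ c, Real.exp (d ^ (i + 1) / (d - 1) * lam E d i c) * E c b
    else 0

/-- The ordered product `P^{(j)} P^{(j+1)} ⋯ P^{(k−1)}`. -/
noncomputable def matListProd {A : Type*} [Fintype A] [DecidableEq A]
    (P : ℕ → Matrix A A ℝ) (j k : ℕ) : Matrix A A ℝ :=
  ((List.range' j (k - j)).map P).prod

/-- The objective function
`F_k(π,P;1/d,E) = −Σ_{j=0}^{k−1} ((d−1)/d^{j+1}) D_KL(P^{(j)}‖E)^T (P^{(j+1)}⋯P^{(k−1)}) π`
(only `P 0, …, P (k−1)` are used). -/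
noncomputable def Fk {A : Type*} [Fintype A] [DecidableEq A] (E : Matrix A A ℝ) (d : ℝ)
    (k : ℕ) (π : A → ℝ) (P : ℕ → Matrix A A ℝ) : ℝ :=
  -∑ j ∈ Finset.range k, ((d - 1) / d ^ (j + 1)) *
      ∑ b, DKL (P j) E b * (matListProd P (j + 1) k).mulVec π b

/-- `P^{(k)}(d,E)`: the maximum of `F_k` over the feasible domain. -/
noncomputable def Pk {A : Type*} [Fintype A] [DecidableEq A] (E : Matrix A A ℝ)
    (d : ℝ) (k : ℕ) : ℝ :=
  sSup {x : ℝ | ∃ π P, IsProbVec π ∧ (∀ j < k, IsColStochastic (P j)) ∧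
    (∀ j < k, ∀ a b, E a b = 0 → P j a b = 0) ∧ x = Fk E d k π P}

/-- `α = log min_b Σ_a E_{a,b}`. -/
noncomputable def alp {A : Type*} [Fintype A] (E : Matrix A A ℝ) : ℝ :=
  Real.log (sInf {x : ℝ | ∃ b, x = ∑ a, E a b})

/-- `β = log max_b Σ_a E_{a,b}`. -/
noncomputable def bet {A : Type*} [Fintype A] (E : Matrix A A ℝ) : ℝ :=
  Real.log (sSup {x : ℝ | ∃ b, x = ∑ a, E a b})

/-- `γ = log min{E_{a,b} : E_{a,b} > 0}`. -/
noncomputable def gam {A : Type*} [Fintype A] (E : Matrix A A ℝ) : ℝ :=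
  Real.log (sInf {x : ℝ | 0 < x ∧ ∃ a b, E a b = x})

/-- `A_∞`: the symbols lying on a cycle, i.e. `a` with `(E^n)_{a,a} > 0` for some `n ≥ 1`. -/
def AinfSet {A : Type*} [Fintype A] [DecidableEq A] (E : Matrix A A ℝ) : Set A :=
  {a | ∃ n : ℕ, 1 ≤ n ∧ 0 < (E ^ n) a a}

/-- `L`: the least `n ≥ 1` with `(E^n)_{a,a} > 0` for all `a ∈ A_∞`. -/
noncomputable def Lconst {A : Type*} [Fintype A] [DecidableEq A] (E : Matrix A A ℝ) : ℕ :=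
  sInf {n : ℕ | 1 ≤ n ∧ ∀ a ∈ AinfSet E, 0 < (E ^ n) a a}

lemma gibbs_le {A : Type*} [Fintype A] (q w : A → ℝ) (hq0 : ∀ a, 0 ≤ q a)
    (hq1 : ∑ a, q a = 1) (hw0 : ∀ a, 0 ≤ w a) (hsupp : ∀ a, w a = 0 → q a = 0)
    (hW : 0 < ∑ a, w a) :
    ∑ a, q a * Real.log (w a / q a) ≤ Real.log (∑ a, w a) := by
  set S := ∑ a, w a with hS
  have key : ∀ a, q a * Real.log (w a / q a) - q a * Real.log S ≤ w a / S - q a := by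
    intro a
    rcases eq_or_lt_of_le (hq0 a) with h | h
    · simp [← h]
      exact div_nonneg (hw0 a) hW.le
    · have hwa : 0 < w a := by
        rcases eq_or_lt_of_le (hw0 a) with hw | hw
        · exact absurd (hsupp a hw.symm) h.ne'
        · exact hw
      have hx : 0 < w a / (q a * S) := by positivity
      have h3 := mul_le_mul_of_nonneg_left (Real.log_le_sub_one_of_pos hx) h.le
      have hlog : Real.log (w a / (q a * S)) = Real.log (w a / q a) - Real.log S := by
        rw [div_mul_eq_div_div, Real.log_div (div_pos hwa h).ne' (ne_of_gt hW)]
      have h2 : q a * (w a / (q a * S)) = w a / S := by field_simp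
      rw [hlog, mul_sub, mul_sub, h2, mul_one] at h3
      linarith
  have hsum := Finset.sum_le_sum (fun a (_ : a ∈ Finset.univ) => key a)
  rw [Finset.sum_sub_distrib, Finset.sum_sub_distrib, ← Finset.sum_mul, hq1,
    ← Finset.sum_div, ← hS, div_self (ne_of_gt hW), one_mul] at hsum
  linarith

section Col
variable {A : Type*} [Fintype A] (E : Matrix A A ℝ) (d : ℝ)

lemma Wpos (hE : AssumptionA E) (i : ℕ) (b : A) :
    0 < ∑ a, Real.exp (d ^ (i + 1) / (d - 1) * lam E d i a) * E a b := by
  obtain ⟨a, ha⟩ : ∃ a, 0 < E a b := by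
    by_contra hcon
    push_neg at hcon
    have : ∑ a, E a b = 0 :=
      Finset.sum_eq_zero fun a _ => le_antisymm (hcon a) (hE.1 a b)
    exact absurd (hE.2.1 b) (by rw [this]; exact lt_irrefl 0)
  refine Finset.sum_pos' (fun c _ => mul_nonneg (Real.exp_pos _).le (hE.1 c b)) ⟨a,
    Finset.mem_univ a, mul_pos (Real.exp_pos _) ha⟩

lemma Pstar_colStochastic (hE : AssumptionA E) (hd : 1 < d) (i : ℕ) :
    IsColStochastic (Pstar E d i) := by
  constructor
  · intro a b
    unfold Pstar
    split
    · exact div_nonneg (mul_nonneg (Real.exp_pos _).le (hE.1 a b)) (Wpos E d hE i b).le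
    · exact le_rfl
  · intro b
    have key : ∀ a : A, Pstar E d i a b =
        Real.exp (d ^ (i + 1) / (d - 1) * lam E d i a) * E a b /
          ∑ c, Real.exp (d ^ (i + 1) / (d - 1) * lam E d i c) * E c b := by
      intro a
      unfold Pstar
      split
      · rfl
      · rename_i h
        have hE0 : E a b = 0 := le_antisymm (not_lt.mp h) (hE.1 a b)
        simp [hE0]
    rw [Finset.sum_congr rfl fun a _ => key a, ← Finset.sum_div,
      div_self (Wpos E d hE i b).ne']

lemma Pstar_supp (i : ℕ) (a b : A) (h : E a b = 0) : Pstar E d i a b = 0 := by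
  unfold Pstar
  rw [if_neg (by rw [h]; exact lt_irrefl 0)]

lemma col_le (hE : AssumptionA E) (hd : 1 < d) (i : ℕ) (Q : Matrix A A ℝ)
    (hQ : IsColStochastic Q) (hsupp : ∀ a b, E a b = 0 → Q a b = 0) (b : A) :
    ∑ a, lam E d i a * Q a b - ((d - 1) / d ^ (i + 1)) * DKL Q E b ≤ lam E d (i + 1) b := by
  have hd0 : (0:ℝ) < d := lt_trans one_pos hd
  set c : ℝ := (d - 1) / d ^ (i + 1) with hcdef
  have hc : 0 < c := div_pos (by linarith) (pow_pos hd0 _)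
  have hcinv : d ^ (i + 1) / (d - 1) = c⁻¹ := by
    rw [hcdef, ← one_div, one_div_div]
  set w : A → ℝ := fun a => Real.exp (d ^ (i + 1) / (d - 1) * lam E d i a) * E a b with hw
  have hW : 0 < ∑ a, w a := Wpos E d hE i b
  have hsupp' : ∀ a, w a = 0 → Q a b = 0 := by
    intro a hwa
    apply hsupp
    have := (Real.exp_pos (d ^ (i + 1) / (d - 1) * lam E d i a)).ne'
    rcases mul_eq_zero.mp hwa with h | h
    · exact absurd h this
    · exact h
  have hgibbs := gibbs_le (fun a => Q a b) w (fun a => hQ.1 a b) (hQ.2 b)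
    (fun a => mul_nonneg (Real.exp_pos _).le (hE.1 a b)) hsupp' hW
  have hlam : lam E d (i + 1) b = c * Real.log (∑ a, w a) := rfl
  rw [hlam]
  have hpt : ∀ a, lam E d i a * Q a b - c * (Q a b * Real.log (Q a b / E a b))
      = c * (Q a b * Real.log (w a / Q a b)) := by
    intro a
    rcases eq_or_lt_of_le (hQ.1 a b) with h | h
    · rw [← h]; ring
    · have hEab : 0 < E a b := by
        rcases eq_or_lt_of_le (hE.1 a b) with hE0 | hE0
        · exact absurd (hsupp a b hE0.symm) h.ne'
        · exact hE0
      have hwa : 0 < w a := mul_pos (Real.exp_pos _) hEab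
      rw [hw]
      rw [show Real.exp (d ^ (i + 1) / (d - 1) * lam E d i a) * E a b / Q a b
        = Real.exp (d ^ (i + 1) / (d - 1) * lam E d i a) * (E a b / Q a b) by ring]
      rw [Real.log_mul (Real.exp_pos _).ne' (by positivity), Real.log_exp,
        Real.log_div hEab.ne' h.ne', Real.log_div h.ne' hEab.ne', hcinv]
      field_simp
      ring
  calc ∑ a, lam E d i a * Q a b - c * DKL Q E b
      = ∑ a, (lam E d i a * Q a b - c * (Q a b * Real.log (Q a b / E a b))) := by
        unfold DKL; rw [Finset.sum_sub_distrib, Finset.mul_sum]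
    _ = c * ∑ a, Q a b * Real.log (w a / Q a b) := by
        rw [Finset.mul_sum]; exact Finset.sum_congr rfl fun a _ => hpt a
    _ ≤ c * Real.log (∑ a, w a) := mul_le_mul_of_nonneg_left hgibbs hc.le

lemma col_eq (hE : AssumptionA E) (hd : 1 < d) (i : ℕ) (b : A) :
    ∑ a, lam E d i a * Pstar E d i a b - ((d - 1) / d ^ (i + 1)) * DKL (Pstar E d i) E b
      = lam E d (i + 1) b := by
  have hd0 : (0:ℝ) < d := lt_trans one_pos hd
  set c : ℝ := (d - 1) / d ^ (i + 1) with hcdef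
  have hc : 0 < c := div_pos (by linarith) (pow_pos hd0 _)
  set W : ℝ := ∑ a, Real.exp (d ^ (i + 1) / (d - 1) * lam E d i a) * E a b with hWdef
  have hW : 0 < W := Wpos E d hE i b
  have hlam : lam E d (i + 1) b = c * Real.log W := rfl
  have hpt : ∀ a, lam E d i a * Pstar E d i a b
      - c * (Pstar E d i a b * Real.log (Pstar E d i a b / E a b))
      = c * (Real.log W * Pstar E d i a b) := by
    intro a
    by_cases hEab : 0 < E a b
    · have hP : Pstar E d i a b
          = Real.exp (d ^ (i + 1) / (d - 1) * lam E d i a) * E a b / W := by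
        unfold Pstar; rw [if_pos hEab]
      have hlogratio : Real.log (Pstar E d i a b / E a b)
          = d ^ (i + 1) / (d - 1) * lam E d i a - Real.log W := by
        rw [hP, show Real.exp (d ^ (i + 1) / (d - 1) * lam E d i a) * E a b / W / E a b
          = Real.exp (d ^ (i + 1) / (d - 1) * lam E d i a) / W by field_simp]
        rw [Real.log_div (Real.exp_pos _).ne' hW.ne', Real.log_exp]
      rw [hlogratio]
      have hd1 : d - 1 ≠ 0 := by linarith
      have hcc : c * (d ^ (i + 1) / (d - 1)) = 1 := by
        rw [hcdef]; field_simp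
      linear_combination (-(lam E d i a * Pstar E d i a b)) * hcc
    · have h0 : Pstar E d i a b = 0 := by unfold Pstar; rw [if_neg hEab]
      rw [h0]; ring
  have hcol : ∑ a, Pstar E d i a b = 1 := (Pstar_colStochastic E d hE hd i).2 b
  calc ∑ a, lam E d i a * Pstar E d i a b - c * DKL (Pstar E d i) E b
      = ∑ a, (lam E d i a * Pstar E d i a b
          - c * (Pstar E d i a b * Real.log (Pstar E d i a b / E a b))) := by
        unfold DKL; rw [Finset.sum_sub_distrib, Finset.mul_sum]
    _ = c * Real.log W * ∑ a, Pstar E d i a b := by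
        rw [Finset.sum_congr rfl fun a _ => hpt a, ← Finset.mul_sum, Finset.mul_sum,
          Finset.mul_sum]
        exact Finset.sum_congr rfl fun a _ => by ring
    _ = c * Real.log W := by rw [hcol, mul_one]
    _ = lam E d (i + 1) b := hlam.symm

end Col

section Main
variable {A : Type*} [Fintype A] [DecidableEq A]

lemma matListProd_self (P : ℕ → Matrix A A ℝ) (k : ℕ) : matListProd P k k = 1 := by
  unfold matListProd
  simp

lemma matListProd_succ (P : ℕ → Matrix A A ℝ) (j k : ℕ) (h : j ≤ k) :
    matListProd P j (k + 1) = matListProd P j k * P k := by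
  unfold matListProd
  rw [Nat.succ_sub h, List.range'_concat, List.map_append, List.prod_append]
  simp [Nat.add_sub_cancel' h]

lemma Fk_succ (E : Matrix A A ℝ) (d : ℝ) (i : ℕ) (μ : A → ℝ) (P : ℕ → Matrix A A ℝ) :
    Fk E d (i + 1) μ P = Fk E d i ((P i).mulVec μ) P
      - ((d - 1) / d ^ (i + 1)) * ∑ b, DKL (P i) E b * μ b := by
  unfold Fk
  rw [Finset.sum_range_succ, matListProd_self, Matrix.one_mulVec]
  have hcong : ∀ j ∈ Finset.range i,
      ((d - 1) / d ^ (j + 1)) *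
          ∑ b, DKL (P j) E b * (matListProd P (j + 1) (i + 1)).mulVec μ b
      = ((d - 1) / d ^ (j + 1)) *
          ∑ b, DKL (P j) E b * (matListProd P (j + 1) i).mulVec ((P i).mulVec μ) b := by
    intro j hj
    have hji : j + 1 ≤ i := Finset.mem_range.mp hj
    rw [matListProd_succ P (j + 1) i hji, ← Matrix.mulVec_mulVec]
  rw [Finset.sum_congr rfl hcong]
  ring

lemma expand_lam_mulVec (E : Matrix A A ℝ) (d : ℝ) (i : ℕ) (μ : A → ℝ)
    (Q : Matrix A A ℝ) :
    ∑ a, lam E d i a * Q.mulVec μ a = ∑ b, (∑ a, lam E d i a * Q a b) * μ b := by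
  simp only [Matrix.mulVec, dotProduct, Finset.mul_sum, Finset.sum_mul]
  rw [Finset.sum_comm]
  exact Finset.sum_congr rfl fun b _ => Finset.sum_congr rfl fun a _ => by ring

lemma Fk_le_aux (E : Matrix A A ℝ) (hE : AssumptionA E) (d : ℝ) (hd : 1 < d)
    (P : ℕ → Matrix A A ℝ) :
    ∀ i (μ : A → ℝ), (∀ a, 0 ≤ μ a) → (∀ j < i, IsColStochastic (P j)) →
      (∀ j < i, ∀ a b, E a b = 0 → P j a b = 0) →
      Fk E d i μ P ≤ ∑ a, lam E d i a * μ a := by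
  intro i
  induction i with
  | zero => intro μ _ _ _; simp [Fk, lam]
  | succ i ih =>
    intro μ hμ hP hPsupp
    rw [Fk_succ]
    have hPi := hP i (Nat.lt_succ_self i)
    have hμ' : ∀ a, 0 ≤ (P i).mulVec μ a := fun a =>
      Finset.sum_nonneg fun b _ => mul_nonneg (hPi.1 a b) (hμ b)
    have h1 := ih ((P i).mulVec μ) hμ' (fun j hj => hP j (hj.trans (Nat.lt_succ_self i)))
      (fun j hj => hPsupp j (hj.trans (Nat.lt_succ_self i)))
    have h2 : ∑ a, lam E d i a * ((P i).mulVec μ) a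
        - ((d - 1) / d ^ (i + 1)) * ∑ b, DKL (P i) E b * μ b
        ≤ ∑ b, lam E d (i + 1) b * μ b := by
      rw [expand_lam_mulVec, Finset.mul_sum, ← Finset.sum_sub_distrib]
      refine Finset.sum_le_sum fun b _ => ?_
      have hcol := col_le E d hE hd i (P i) hPi (hPsupp i (Nat.lt_succ_self i)) b
      calc (∑ a, lam E d i a * P i a b) * μ b
            - (d - 1) / d ^ (i + 1) * (DKL (P i) E b * μ b)
          = (∑ a, lam E d i a * P i a b - (d - 1) / d ^ (i + 1) * DKL (P i) E b) * μ b := by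
            ring
        _ ≤ lam E d (i + 1) b * μ b := mul_le_mul_of_nonneg_right hcol (hμ b)
    linarith

lemma Fk_eq_aux (E : Matrix A A ℝ) (hE : AssumptionA E) (d : ℝ) (hd : 1 < d) :
    ∀ i (μ : A → ℝ), Fk E d i μ (fun j => Pstar E d j) = ∑ a, lam E d i a * μ a := by
  intro i
  induction i with
  | zero => intro μ; simp [Fk, lam]
  | succ i ih =>
    intro μ
    rw [Fk_succ, ih]
    have h2 : ∑ a, lam E d i a * ((Pstar E d i).mulVec μ) a
        - ((d - 1) / d ^ (i + 1)) * ∑ b, DKL (Pstar E d i) E b * μ b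
        = ∑ b, lam E d (i + 1) b * μ b := by
      rw [expand_lam_mulVec, Finset.mul_sum, ← Finset.sum_sub_distrib]
      refine Finset.sum_congr rfl fun b _ => ?_
      have hcol := col_eq E d hE hd i b
      calc (∑ a, lam E d i a * Pstar E d i a b) * μ b
            - (d - 1) / d ^ (i + 1) * (DKL (Pstar E d i) E b * μ b)
          = (∑ a, lam E d i a * Pstar E d i a b
              - (d - 1) / d ^ (i + 1) * DKL (Pstar E d i) E b) * μ b := by ring
        _ = lam E d (i + 1) b * μ b := by rw [hcol]
    linarith

end Main


/-- `F_k(π,P;1/d,E) ≤ (λ^{(k)})^T π` on the feasible domain, with equality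
at `P = P*`; hence the maximum of `F_k` is `max_a λ^{(k)}_a`. -/
theorem stmt13 {A : Type*} [Fintype A] [DecidableEq A] [Nonempty A] (E : Matrix A A ℝ)
    (hE : AssumptionA E) (d : ℝ) (hd : 1 < d) (k : ℕ) (hk : 1 ≤ k) :
    (∀ (π : A → ℝ) (P : ℕ → Matrix A A ℝ), IsProbVec π →
        (∀ j < k, IsColStochastic (P j)) → (∀ j < k, ∀ a b, E a b = 0 → P j a b = 0) →
        Fk E d k π P ≤ ∑ a, lam E d k a * π a) ∧
    (∀ π : A → ℝ, IsProbVec π →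
        Fk E d k π (fun i => Pstar E d i) = ∑ a, lam E d k a * π a) ∧
    IsGreatest {x : ℝ | ∃ π P, IsProbVec π ∧ (∀ j < k, IsColStochastic (P j)) ∧
        (∀ j < k, ∀ a b, E a b = 0 → P j a b = 0) ∧ x = Fk E d k π P}
      (Finset.univ.sup' Finset.univ_nonempty fun a => lam E d k a) := by
  have part1 : ∀ (π : A → ℝ) (P : ℕ → Matrix A A ℝ), IsProbVec π →
      (∀ j < k, IsColStochastic (P j)) → (∀ j < k, ∀ a b, E a b = 0 → P j a b = 0) →
      Fk E d k π P ≤ ∑ a, lam E d k a * π a := fun π P hπ hP hPsupp =>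
    Fk_le_aux E hE d hd P k π hπ.1 hP hPsupp
  have part2 : ∀ π : A → ℝ, IsProbVec π →
      Fk E d k π (fun i => Pstar E d i) = ∑ a, lam E d k a * π a := fun π _ =>
    Fk_eq_aux E hE d hd k π
  refine ⟨part1, part2, ?_, ?_⟩
  · obtain ⟨a₀, -, ha₀⟩ := Finset.exists_mem_eq_sup' Finset.univ_nonempty
      (fun a => lam E d k a)
    refine ⟨fun a => if a = a₀ then 1 else 0, fun i => Pstar E d i, ?_, ?_, ?_, ?_⟩
    · exact ⟨fun a => by by_cases h : a = a₀ <;> simp [h], by simp⟩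
    · exact fun j _ => Pstar_colStochastic E d hE hd j
    · exact fun j _ a b h => Pstar_supp E d j a b h
    · rw [part2 _ ⟨fun a => by by_cases h : a = a₀ <;> simp [h], by simp⟩, ha₀]
      simp [mul_ite]
  · rintro x ⟨π, P, hπ, hP, hPsupp, rfl⟩
    have h1 := part1 π P hπ hP hPsupp
    have h2 : ∑ a, lam E d k a * π a
        ≤ Finset.univ.sup' Finset.univ_nonempty (fun a => lam E d k a) := by
      calc ∑ a, lam E d k a * π a
          ≤ ∑ a, (Finset.univ.sup' Finset.univ_nonempty fun a => lam E d k a) * π a :=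
            Finset.sum_le_sum fun a _ => mul_le_mul_of_nonneg_right
              (Finset.le_sup' _ (Finset.mem_univ a)) (hπ.1 a)
        _ = (Finset.univ.sup' Finset.univ_nonempty fun a => lam E d k a) * ∑ a, π a := by
            rw [Finset.mul_sum]
        _ = _ := by rw [hπ.2, mul_one]
    linarith
end
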